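/- arXiv:1305.7100 — 8 statements merged into one kernel-verified Lean document; each statement's English description precedes it below -/
import Mathlib

section
/- Let X be a complex Banach space of dimension at least two, let r and s be nonnegative integers with r + s ≥ 1, and let A be a nonzero bounded linear operator on X. Then the following are equivalent: (1) A has rank one; (2) for every bounded linear operator B on X, σ_π(B^r A B^s) is a singleton; (3) for every bounded linear operator B on X with rank(B) ≤ 2, σ_π(B^r A B^s) is a singleton. -/
/-!
If `A` has rank one, `T = B^r A B^s` has rank at most one, hence `T² = cT` and `σ(T) ⊆ {0, c}`;
only one point of such a set can have maximal modulus.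

Conversely, `σ(ST) \ {0} = σ(TS) \ {0}` gives `σ_π(B^r A B^s) = σ_π(B^(r+s) A)`. If `A` has rank at
least two, there are vectors `u, v` and functionals `φ, ψ` biorthogonal to them such that the
compression of `A` to `span {u, v}` is upper triangular and invertible. Taking
`B = a φ ⊗ u + b ψ ⊗ v`, the operator `B^(r+s) A` maps into `span {u, v}` and acts there by
`diag(a^(r+s), b^(r+s))` times that compression; choosing the roots `a, b` to make its diagonal
`1, -1` gives `σ_π(B^(r+s) A) = {1, -1}`. The vectors `u, v` come from an `x` with `x, Ax, A²x`
independent, from a plane `span {x, Ax}` on which `A` is invertible, or, when `A² = μA`, from two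
independent vectors of the range (`μ ≠ 0`) or their preimages (`μ = 0`).
-/

open scoped ENNReal

noncomputable def periSpec {X : Type*} [NormedAddCommGroup X] [NormedSpace ℂ X]
    (T : X →L[ℂ] X) : Set ℂ :=
  {z | z ∈ spectrum ℂ T ∧ (‖z‖₊ : ℝ≥0∞) = spectralRadius ℂ T}

theorem LinearMap.rank_le_two_of_forall_mem_span_pair {K V W : Type*} [DivisionRing K]
    [AddCommGroup V] [Module K V] [AddCommGroup W] [Module K W] (f : V →ₗ[K] W) {u v : W}
    (h : ∀ z, f z ∈ Submodule.span K {u, v}) : f.rank ≤ 2 :=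
  calc f.rank ≤ Module.rank K (Submodule.span K {u, v}) :=
        Submodule.rank_mono (LinearMap.range_le_iff_comap.mpr (eq_top_iff.mpr fun z _ => h z))
    _ ≤ Cardinal.mk ({u, v} : Set W) := rank_span_le _
    _ ≤ 2 := Cardinal.mk_insert_le.trans (by simp; norm_num)

section LinearAlgebra

variable {K V : Type*} [Field K] [AddCommGroup V] [Module K V]

theorem LinearMap.exists_apply_apply_eq_smul_apply_of_rank_le_one (f : V →ₗ[K] V)
    (h : f.rank ≤ 1) : ∃ c : K, ∀ z, f (f z) = c • f z := by
  obtain ⟨y, hy⟩ := rank_le_one_iff.mp h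
  obtain ⟨c, hc⟩ := hy ⟨f y, y, rfl⟩
  refine ⟨c, fun z => ?_⟩
  obtain ⟨t, ht⟩ := hy ⟨f z, z, rfl⟩
  have hfy : f y = c • (y : V) := congrArg Subtype.val hc.symm
  have hfz : f z = t • (y : V) := congrArg Subtype.val ht.symm
  rw [hfz, map_smul, hfy, smul_comm]

theorem LinearMap.exists_apply_apply_eq_smul_apply_of_forall_not_linearIndependent
    {f : V →ₗ[K] V} (h : ∀ x, ¬ LinearIndependent K ![f x, f (f x)]) :
    ∃ μ : K, ∀ x, f (f x) = μ • f x := by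
  let g : range f →ₗ[K] range f := f.restrict fun y _ => mem_range_self f y
  obtain ⟨μ, hμ⟩ := LinearMap.exists_eq_smul_id_of_forall_notLinearIndependent (f := g) <| by
    rintro ⟨_, x, rfl⟩ hx
    exact h x (LinearIndependent.pair_iff.mpr fun s t hst =>
      LinearIndependent.pair_iff.mp hx s t (Subtype.ext hst))
  exact ⟨μ, fun x => congrArg Subtype.val (LinearMap.congr_fun hμ ⟨f x, x, rfl⟩)⟩

theorem LinearMap.exists_linearIndependent_pair_of_one_lt_rank {W : Type*} [AddCommGroup W]
    [Module K W] {f : V →ₗ[K] W} (h : 1 < f.rank) :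
    ∃ x₁ x₂, LinearIndependent K ![f x₁, f x₂] := by
  have : Nontrivial (LinearMap.range f) := rank_pos_iff_nontrivial.mp (zero_lt_one.trans h)
  obtain ⟨y, hy⟩ := exists_ne (0 : LinearMap.range f)
  obtain ⟨z, hyz⟩ := _root_.exists_linearIndependent_pair_of_one_lt_rank h hy
  obtain ⟨_, x₁, rfl⟩ := y
  obtain ⟨_, x₂, rfl⟩ := z
  exact ⟨x₁, x₂, LinearIndependent.pair_iff.mpr fun s t hst =>
    LinearIndependent.pair_iff.mp hyz s t (Subtype.ext hst)⟩

theorem LinearMap.linearIndependent_of_apply_apply_eq_zero {f : V →ₗ[K] V} {x₁ x₂ : V}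
    (hx : LinearIndependent K ![f x₁, f x₂]) (h₁ : f (f x₁) = 0) (h₂ : f (f x₂) = 0) :
    LinearIndependent K ![x₁, x₂, f x₁, f x₂] := by
  rw [Fintype.linearIndependent_iff]
  intro g hg
  simp only [Fin.sum_univ_four, Matrix.cons_val] at hg
  have h01 := LinearIndependent.pair_iff.mp hx (g 0) (g 1) (by simpa [h₁, h₂] using congrArg f hg)
  have h23 := LinearIndependent.pair_iff.mp hx (g 2) (g 3) (by simpa [h01] using hg)
  intro i
  fin_cases i <;> simp [h01, h23]

end LinearAlgebra

theorem LinearIndependent.exists_strongDual_apply_eq {R V ι : Type*} [Field R]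
    [TopologicalSpace R] [IsTopologicalRing R] [AddCommGroup V] [TopologicalSpace V] [Module R V]
    [SeparatingDual R V] [Fintype ι] {w : ι → V} (hw : LinearIndependent R w) (c : ι → R) :
    ∃ φ : StrongDual R V, ∀ i, φ (w i) = c i := by
  classical
  obtain ⟨φ, hφ⟩ := SeparatingDual.dualMap_surjective_iff.mpr
    hw.fintypeLinearCombination_injective (Fintype.linearCombination R c)
  refine ⟨φ, fun i => ?_⟩
  simpa using LinearMap.congr_fun hφ (Pi.single i 1)

namespace spectrum

theorem eval_eq_zero_of_aeval_eq_zero {𝕜 A : Type*} [Field 𝕜] [Ring A] [Algebra 𝕜 A] {a : A}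
    {p : Polynomial 𝕜} (hp : Polynomial.aeval a p = 0) {μ : 𝕜} (hμ : μ ∈ spectrum 𝕜 a) :
    p.eval μ = 0 := by
  rcases subsingleton_or_nontrivial A with _ | _
  · simp [spectrum.of_subsingleton] at hμ
  simpa [hp] using spectrum.subset_polynomial_aeval a p ⟨μ, hμ, rfl⟩

theorem nnnorm_le_spectralRadius {𝕜 A : Type*} [NormedField 𝕜] [Ring A] [Algebra 𝕜 A] {a : A}
    {k : 𝕜} (hk : k ∈ spectrum 𝕜 a) : (‖k‖₊ : ℝ≥0∞) ≤ spectralRadius 𝕜 a :=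
  le_iSup₂ (f := fun k (_ : k ∈ spectrum 𝕜 a) => (‖k‖₊ : ℝ≥0∞)) k hk

variable {A : Type*} [NormedRing A] [NormedAlgebra ℂ A]

theorem spectralRadius_le_of_sdiff_zero_subset {a b : A}
    (h : spectrum ℂ a \ {0} ⊆ spectrum ℂ b) : spectralRadius ℂ a ≤ spectralRadius ℂ b := by
  refine iSup₂_le fun μ hμ => ?_
  rcases eq_or_ne μ 0 with rfl | hμ0
  · simp
  · exact nnnorm_le_spectralRadius (h ⟨hμ, hμ0⟩)

theorem spectralRadius_mul_comm (a b : A) :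
    spectralRadius ℂ (a * b) = spectralRadius ℂ (b * a) :=
  le_antisymm
    (spectralRadius_le_of_sdiff_zero_subset ((nonzero_mul_comm a b).subset.trans Set.sdiff_subset))
    (spectralRadius_le_of_sdiff_zero_subset ((nonzero_mul_comm b a).subset.trans Set.sdiff_subset))

end spectrum

section Operators

variable {X : Type*} [NormedAddCommGroup X] [NormedSpace ℂ X]

theorem ContinuousLinearMap.mem_spectrum_of_apply_eq_smul {T : X →L[ℂ] X} {μ : ℂ} {e : X}
    (he : e ≠ 0) (hT : T e = μ • e) : μ ∈ spectrum ℂ T := by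
  rintro hunit
  have hinj := ((Module.End.isUnit_iff _).1 (hunit.map toLinearMapRingHom)).injective
  exact he (hinj (by simp [Algebra.algebraMap_eq_smul_one, hT]))

theorem ContinuousLinearMap.exists_spectrum_subset_pair_of_rank_le_one (T : X →L[ℂ] X)
    (h : LinearMap.rank (T : X →ₗ[ℂ] X) ≤ 1) : ∃ c : ℂ, spectrum ℂ T ⊆ {0, c} := by
  obtain ⟨c, hc⟩ := (T : X →ₗ[ℂ] X).exists_apply_apply_eq_smul_apply_of_rank_le_one h
  have hsq : Polynomial.aeval T (Polynomial.X ^ 2 - Polynomial.C c * Polynomial.X) = 0 := by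
    ext z
    simpa [pow_two, Algebra.algebraMap_eq_smul_one, sub_eq_zero] using hc z
  refine ⟨c, fun μ hμ => ?_⟩
  have hμc := spectrum.eval_eq_zero_of_aeval_eq_zero hsq hμ
  simp only [Polynomial.eval_sub, Polynomial.eval_pow, Polynomial.eval_mul, Polynomial.eval_X,
    Polynomial.eval_C] at hμc
  have : μ * (μ - c) = 0 := by linear_combination hμc
  simpa [sub_eq_zero] using this

theorem norm_eq_of_mem_periSpec {T : X →L[ℂ] X} {z w : ℂ} (hz : z ∈ periSpec T)
    (hw : w ∈ periSpec T) : ‖z‖ = ‖w‖ := by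
  have : ‖z‖₊ = ‖w‖₊ := by exact_mod_cast hz.2.trans hw.2.symm
  exact congrArg NNReal.toReal this

theorem periSpec_nonempty [CompleteSpace X] [Nontrivial X] (T : X →L[ℂ] X) :
    (periSpec T).Nonempty :=
  spectrum.exists_nnnorm_eq_spectralRadius_of_nonempty (spectrum.nonempty T)

theorem periSpec_mul_comm [CompleteSpace X] [Nontrivial X] (S T : X →L[ℂ] X) :
    periSpec (S * T) = periSpec (T * S) := by
  suffices h : ∀ S T : X →L[ℂ] X, periSpec (S * T) ⊆ periSpec (T * S) from
    (h S T).antisymm (h T S)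
  intro S T z ⟨hz, hzr⟩
  have hr := spectrum.spectralRadius_mul_comm S T
  refine ⟨?_, hzr.trans hr⟩
  rcases eq_or_ne z 0 with rfl | hz0
  · obtain ⟨w, hw, hwr⟩ := periSpec_nonempty (T * S)
    have : ‖w‖₊ = 0 := by simpa [← hr, ← hzr] using hwr
    simpa [nnnorm_eq_zero.mp this] using hw
  · exact ((spectrum.nonzero_mul_comm S T).subset ⟨hz, hz0⟩).1

theorem exists_periSpec_eq_singleton_of_spectrum_subset_pair [CompleteSpace X] [Nontrivial X]
    {T : X →L[ℂ] X} {c : ℂ} (h : spectrum ℂ T ⊆ {0, c}) : ∃ z, periSpec T = {z} := by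
  obtain ⟨z, hz⟩ := periSpec_nonempty T
  refine ⟨z, Set.eq_singleton_iff_unique_mem.mpr ⟨hz, fun w hw => ?_⟩⟩
  have hnorm := norm_eq_of_mem_periSpec hw hz
  rcases h hw.1 with rfl | rfl <;> rcases h hz.1 with rfl | rfl <;> simp_all [eq_comm]

theorem periSpec_eq_of_eigenvectors {T : X →L[ℂ] X} {e₁ e₂ : X} (h₁ : e₁ ≠ 0) (h₂ : e₂ ≠ 0)
    (hT₁ : T e₁ = e₁) (hT₂ : T e₂ = -e₂) (hrange : ∀ z, ∃ p q : ℂ, T z = p • e₁ + q • e₂) :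
    periSpec T = {1, -1} := by
  have hone : (1 : ℂ) ∈ spectrum ℂ T :=
    ContinuousLinearMap.mem_spectrum_of_apply_eq_smul h₁ (by simpa using hT₁)
  have hneg : (-1 : ℂ) ∈ spectrum ℂ T :=
    ContinuousLinearMap.mem_spectrum_of_apply_eq_smul h₂ (by simpa using hT₂)
  have hcube : Polynomial.aeval T (Polynomial.X ^ 3 - Polynomial.X : Polynomial ℂ) = 0 := by
    ext z
    obtain ⟨p, q, hz⟩ := hrange z
    simp [pow_succ, hz, hT₁, hT₂]
  have hsub : ∀ μ ∈ spectrum ℂ T, μ = 0 ∨ μ = 1 ∨ μ = -1 := by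
    intro μ hμ
    have hμ3 := spectrum.eval_eq_zero_of_aeval_eq_zero hcube hμ
    simp only [Polynomial.eval_sub, Polynomial.eval_pow, Polynomial.eval_X] at hμ3
    have : μ * ((μ - 1) * (μ + 1)) = 0 := by linear_combination hμ3
    simpa [sub_eq_zero, add_eq_zero_iff_eq_neg] using this
  have hr : spectralRadius ℂ T = 1 := by
    refine le_antisymm (iSup₂_le fun μ hμ => ?_) ?_
    · rcases hsub μ hμ with rfl | rfl | rfl <;> simp
    · simpa using spectrum.nnnorm_le_spectralRadius hone
  ext μ
  simp only [periSpec, hr, Set.mem_ofPred_eq, Set.mem_insert_iff, Set.mem_singleton_iff]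
  constructor
  · rintro ⟨hμ, hn⟩
    rcases hsub μ hμ with rfl | h | h
    · simp at hn
    · exact Or.inl h
    · exact Or.inr h
  · rintro (rfl | rfl)
    · exact ⟨hone, by simp⟩
    · exact ⟨hneg, by simp⟩

/-- `φ, ψ` are biorthogonal to `u, v`, and the compression of `A` to `span {u, v}`, with matrix
`[[φ (A u), φ (A v)], [ψ (A u), ψ (A v)]]`, is upper triangular and invertible. -/
structure IsInvertibleTriangularCompression (A : X →L[ℂ] X) (u v : X) (φ ψ : StrongDual ℂ X) :
    Prop where
  φ_u : φ u = 1
  φ_v : φ v = 0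
  ψ_u : ψ u = 0
  ψ_v : ψ v = 1
  ψ_Au : ψ (A u) = 0
  φ_Au : φ (A u) ≠ 0
  ψ_Av : ψ (A v) ≠ 0

theorem IsInvertibleTriangularCompression.exists_periSpec_pow_mul_eq {A : X →L[ℂ] X} {u v : X}
    {φ ψ : StrongDual ℂ X} (hc : IsInvertibleTriangularCompression A u v φ ψ) {n : ℕ}
    (hn : n ≠ 0) :
    ∃ B : X →L[ℂ] X, LinearMap.rank (B : X →ₗ[ℂ] X) ≤ 2 ∧ periSpec (B ^ n * A) = {1, -1} := by
  obtain ⟨a, ha⟩ := IsAlgClosed.exists_pow_nat_eq (φ (A u))⁻¹ (Nat.pos_of_ne_zero hn)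
  obtain ⟨b, hb⟩ := IsAlgClosed.exists_pow_nat_eq (-(ψ (A v))⁻¹) (Nat.pos_of_ne_zero hn)
  set B : X →L[ℂ] X := (a • φ).smulRight u + (b • ψ).smulRight v
  have hB : ∀ z, B z = (a * φ z) • u + (b * ψ z) • v := fun z => by simp [B]
  have hBpow : ∀ k z, (B ^ (k + 1)) z = (a ^ (k + 1) * φ z) • u + (b ^ (k + 1) * ψ z) • v := by
    intro k
    induction k with
    | zero => simpa using hB
    | succ k ih =>
      intro z
      rw [pow_succ', mul_apply_eq_comp, ih, hB]
      simp only [map_add, map_smul, hc.φ_u, hc.φ_v, hc.ψ_u, hc.ψ_v, smul_eq_mul]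
      module
  obtain ⟨k, rfl⟩ := Nat.exists_eq_succ_of_ne_zero hn
  have hT : ∀ z, (B ^ (k + 1) * A) z =
      ((φ (A u))⁻¹ * φ (A z)) • u + (-(ψ (A v))⁻¹ * ψ (A z)) • v := by
    intro z
    rw [mul_apply_eq_comp, hBpow, ha, hb]
  -- `B ^ (k + 1) * A` acts on `span {u, v}` by the matrix `[[1, m], [0, -1]]`.
  set m := (φ (A u))⁻¹ * φ (A v)
  refine ⟨B, (B : X →ₗ[ℂ] X).rank_le_two_of_forall_mem_span_pair (u := u) (v := v) fun z => ?_,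
    periSpec_eq_of_eigenvectors (e₁ := u) (e₂ := v - (m / 2) • u) ?_ ?_ ?_ ?_ ?_⟩
  · rw [ContinuousLinearMap.coe_coe, hB]
    exact Submodule.mem_span_pair.mpr ⟨_, _, rfl⟩
  · intro hu
    simpa [hu] using hc.φ_u
  · intro hv
    simpa [hc.ψ_u, hc.ψ_v] using congrArg ψ hv
  · rw [hT, hc.ψ_Au, inv_mul_cancel₀ hc.φ_Au]
    simp
  · rw [map_sub, map_smul, hT, hT, hc.ψ_Au, inv_mul_cancel₀ hc.φ_Au, neg_mul,
      inv_mul_cancel₀ hc.ψ_Av]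
    module
  · intro z
    exact ⟨(φ (A u))⁻¹ * φ (A z) + (-(ψ (A v))⁻¹ * ψ (A z)) * (m / 2),
      -(ψ (A v))⁻¹ * ψ (A z), by rw [hT]; module⟩

variable {A : X →L[ℂ] X}

theorem exists_isInvertibleTriangularCompression_of_linearIndependent_iterates {x : X}
    (hx : LinearIndependent ℂ ![x, A x, A (A x)]) :
    ∃ u v φ ψ, IsInvertibleTriangularCompression A u v φ ψ := by
  obtain ⟨φ, hφ⟩ := hx.exists_strongDual_apply_eq ![1, 0, 1]
  obtain ⟨ψ, hψ⟩ := hx.exists_strongDual_apply_eq ![-1, 1, -1]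
  simp only [Fin.forall_fin_succ, Matrix.cons_val_zero, Matrix.cons_val_succ,
    Matrix.cons_val_fin_one, forall_const] at hφ hψ
  refine ⟨x + A x, A x, φ, ψ, ?_, ?_, ?_, ?_, ?_, ?_, ?_⟩ <;> simp [hφ, hψ]

theorem exists_isInvertibleTriangularCompression_of_sq_apply_eq {x : X} {α β : ℂ}
    (hx : LinearIndependent ℂ ![x, A x]) (hα : α ≠ 0) (hA : A (A x) = α • x + β • A x) :
    ∃ u v φ ψ, IsInvertibleTriangularCompression A u v φ ψ := by
  -- `κ` is an eigenvalue of `A` on `span {x, A x}`, with eigenvector `A x + (κ - β) • x`.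
  obtain ⟨κ, hκ⟩ : ∃ κ : ℂ, 1 * (κ * κ) + -β * κ + -α = 0 :=
    exists_quadratic_eq_zero one_ne_zero (IsAlgClosed.exists_eq_mul_self _)
  have hκ0 : κ ≠ 0 := by rintro rfl; exact hα (by linear_combination -hκ)
  have hβκ : β - κ ≠ 0 := fun h => hα (by linear_combination -hκ - κ * h)
  obtain ⟨φ, hφ⟩ := hx.exists_strongDual_apply_eq ![0, 1]
  obtain ⟨ψ, hψ⟩ := hx.exists_strongDual_apply_eq ![1, β - κ]
  simp only [Fin.forall_fin_succ, Matrix.cons_val_zero, Matrix.cons_val_succ,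
    Matrix.cons_val_fin_one, forall_const] at hφ hψ
  refine ⟨A x + (κ - β) • x, x, φ, ψ, ?_, ?_, ?_, ?_, ?_, ?_, ?_⟩ <;>
    simp only [map_add, map_smul, hA, hφ, hψ, smul_eq_mul] <;>
    first | ring1 | linear_combination -hκ | exact hβκ | simpa using hκ0

theorem exists_isInvertibleTriangularCompression_of_eigenvectors {u v : X} {μ₁ μ₂ : ℂ}
    (huv : LinearIndependent ℂ ![u, v]) (hu : A u = μ₁ • u) (hv : A v = μ₂ • v)
    (hμ₁ : μ₁ ≠ 0) (hμ₂ : μ₂ ≠ 0) :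
    ∃ u v φ ψ, IsInvertibleTriangularCompression A u v φ ψ := by
  obtain ⟨φ, hφ⟩ := huv.exists_strongDual_apply_eq ![1, 0]
  obtain ⟨ψ, hψ⟩ := huv.exists_strongDual_apply_eq ![0, 1]
  simp only [Fin.forall_fin_succ, Matrix.cons_val_zero, Matrix.cons_val_succ,
    Matrix.cons_val_fin_one, forall_const] at hφ hψ
  refine ⟨u, v, φ, ψ, ?_, ?_, ?_, ?_, ?_, ?_, ?_⟩ <;> simp [hφ, hψ, hu, hv, hμ₁, hμ₂]

theorem exists_isInvertibleTriangularCompression_of_linearIndependent₄ {x₁ x₂ : X}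
    (hx : LinearIndependent ℂ ![x₁, x₂, A x₁, A x₂]) :
    ∃ u v φ ψ, IsInvertibleTriangularCompression A u v φ ψ := by
  obtain ⟨φ, hφ⟩ := hx.exists_strongDual_apply_eq ![1, 0, 1, 0]
  obtain ⟨ψ, hψ⟩ := hx.exists_strongDual_apply_eq ![0, 1, 0, 1]
  simp only [Fin.forall_fin_succ, Matrix.cons_val_zero, Matrix.cons_val_succ,
    Matrix.cons_val_fin_one, forall_const] at hφ hψ
  refine ⟨x₁, x₂, φ, ψ, ?_, ?_, ?_, ?_, ?_, ?_, ?_⟩ <;> simp [hφ, hψ]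

theorem exists_isInvertibleTriangularCompression (hA : 1 < LinearMap.rank (A : X →ₗ[ℂ] X)) :
    ∃ u v φ ψ, IsInvertibleTriangularCompression A u v φ ψ := by
  by_cases hcyc : ∃ x, LinearIndependent ℂ ![A x, A (A x)]
  · obtain ⟨x, hx⟩ := hcyc
    by_cases h3 : LinearIndependent ℂ ![x, A x, A (A x)]
    · exact exists_isInvertibleTriangularCompression_of_linearIndependent_iterates h3
    have hmem : x ∈ Submodule.span ℂ {A x, A (A x)} := by
      by_contra hnot
      refine h3 (linearIndependent_finCons.mpr ⟨hx, ?_⟩)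
      simpa [Set.pair_comm] using hnot
    obtain ⟨p, q, hpq⟩ := Submodule.mem_span_pair.mp hmem
    have hApq : p • A (A x) + q • A (A (A x)) = A x := by simpa using congrArg A hpq
    have hq : q ≠ 0 := by
      rintro rfl
      have := LinearIndependent.pair_iff.mp hx 1 (-p) (by linear_combination (norm := module) -hApq)
      exact one_ne_zero this.1
    refine exists_isInvertibleTriangularCompression_of_sq_apply_eq hx (inv_ne_zero hq)
      (β := -(q⁻¹ * p)) ?_
    calc A (A (A x)) = q⁻¹ • (q • A (A (A x))) := by rw [smul_smul, inv_mul_cancel₀ hq, one_smul]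
      _ = q⁻¹ • (A x - p • A (A x)) := by congr 1; linear_combination (norm := module) hApq
      _ = q⁻¹ • A x + -(q⁻¹ * p) • A (A x) := by module
  · push Not at hcyc
    obtain ⟨μ, hμ⟩ :=
      (A : X →ₗ[ℂ] X).exists_apply_apply_eq_smul_apply_of_forall_not_linearIndependent hcyc
    obtain ⟨x₁, x₂, hx⟩ := LinearMap.exists_linearIndependent_pair_of_one_lt_rank hA
    rcases eq_or_ne μ 0 with rfl | hμ0
    · refine exists_isInvertibleTriangularCompression_of_linearIndependent₄
        ((A : X →ₗ[ℂ] X).linearIndependent_of_apply_apply_eq_zero hx ?_ ?_) <;> simpa using hμ _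
    · exact exists_isInvertibleTriangularCompression_of_eigenvectors hx (hμ x₁) (hμ x₂) hμ0 hμ0

end Operators

theorem rankOne_iff_periSpec_singleton_general {X : Type*} [NormedAddCommGroup X] [NormedSpace ℂ X]
    [CompleteSpace X]
    (r s : ℕ) (hrs : 1 ≤ r + s) (A : X →L[ℂ] X) (hA : A ≠ 0) :
    List.TFAE [
      LinearMap.rank (A : X →ₗ[ℂ] X) = 1,
      ∀ B : X →L[ℂ] X, ∃ z : ℂ, periSpec (B ^ r * A * B ^ s) = {z},
      ∀ B : X →L[ℂ] X, LinearMap.rank (B : X →ₗ[ℂ] X) ≤ 2 →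
        ∃ z : ℂ, periSpec (B ^ r * A * B ^ s) = {z}] := by
  obtain ⟨x, hx⟩ := DFunLike.ne_iff.mp hA
  have : Nontrivial X := nontrivial_of_ne x 0 fun h => hx (by simp [h])
  tfae_have 1 → 2 := fun h1 B => by
    have hrank : LinearMap.rank ((B ^ r * A * B ^ s : X →L[ℂ] X) : X →ₗ[ℂ] X) ≤ 1 :=
      ((LinearMap.rank_comp_le_right _ _).trans (LinearMap.rank_comp_le_left _ _)).trans h1.le
    obtain ⟨c, hc⟩ := (B ^ r * A * B ^ s).exists_spectrum_subset_pair_of_rank_le_one hrank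
    exact exists_periSpec_eq_singleton_of_spectrum_subset_pair hc
  tfae_have 2 → 3 := fun h2 B _ => h2 B
  tfae_have 3 → 1 := by
    intro h3
    by_contra h1
    have hpos : 0 < LinearMap.rank (A : X →ₗ[ℂ] X) :=
      rank_pos_iff_exists_ne_zero.mpr ⟨⟨A x, x, rfl⟩, fun h => hx (congrArg Subtype.val h)⟩
    obtain ⟨u, v, φ, ψ, hc⟩ := exists_isInvertibleTriangularCompression
      ((Cardinal.one_le_iff_pos.mpr hpos).lt_of_ne' h1)
    obtain ⟨B, hB, hBA⟩ := hc.exists_periSpec_pow_mul_eq (n := s + r) (by omega)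
    obtain ⟨z, hz⟩ := h3 B hB
    rw [periSpec_mul_comm, ← mul_assoc, ← pow_add, hBA] at hz
    have h1z : (1 : ℂ) = z := hz.subset (by simp)
    have h2z : (-1 : ℂ) = z := hz.subset (by simp)
    norm_num [← h2z] at h1z
  tfae_finish

/-- Lemma 2.3: for a nonzero bounded operator `A` on a complex Banach space `X` of dimension
at least two and nonnegative integers `r, s` with `r + s ≥ 1`, the following are equivalent:
(1) `A` has rank one;
(2) for every bounded operator `B`, `σ_π(B^r A B^s)` is a singleton;
(3) for every bounded operator `B` of rank at most two, `σ_π(B^r A B^s)` is a singleton. -/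
theorem rankOne_iff_periSpec_singleton {X : Type*} [NormedAddCommGroup X] [NormedSpace ℂ X]
    [CompleteSpace X] (hdim : 2 ≤ Module.rank ℂ X)
    (r s : ℕ) (hrs : 1 ≤ r + s) (A : X →L[ℂ] X) (hA : A ≠ 0) :
    List.TFAE [
      LinearMap.rank (A : X →ₗ[ℂ] X) = 1,
      ∀ B : X →L[ℂ] X, ∃ z : ℂ, periSpec (B ^ r * A * B ^ s) = {z},
      ∀ B : X →L[ℂ] X, LinearMap.rank (B : X →ₗ[ℂ] X) ≤ 2 →
        ∃ z : ℂ, periSpec (B ^ r * A * B ^ s) = {z}] :=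
  rankOne_iff_periSpec_singleton_general r s hrs A hA
end

section
/- Let X be a complex Banach space, let r and s be nonnegative integers with r + s ≥ 1, let x ∈ X, f ∈ X*, and let A be a bounded linear operator on X. Then the peripheral spectrum of (x⊗f)^r A (x⊗f)^s is the singleton {f(x)^{r+s-1} · f(Ax)}, i.e. the singleton consisting of the trace of the rank-at-most-one operator (x⊗f)^r A (x⊗f)^s. -/
open scoped ENNReal

open Polynomial in
/-- If `T² = λ•T` and `λ` is in the spectrum whenever nonzero, then the peripheral
spectrum of `T` is `{λ}`. -/
lemma periSpec_of_sq {X : Type*} [NormedAddCommGroup X] [NormedSpace ℂ X]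
    [CompleteSpace X] [Nontrivial X] (T : X →L[ℂ] X) (lam : ℂ)
    (h : T * T = lam • T) (hmem : lam ≠ 0 → lam ∈ spectrum ℂ T) :
    periSpec T = {lam} := by
  have hsub : spectrum ℂ T ⊆ {0, lam} := by
    intro z hz
    have h0 : aeval T (Polynomial.X * Polynomial.X - Polynomial.C lam * Polynomial.X : ℂ[X]) = 0 := by
      simp [sub_eq_zero, h, Algebra.smul_def]
    have h1 := spectrum.subset_polynomial_aeval T (Polynomial.X * Polynomial.X - Polynomial.C lam * Polynomial.X : ℂ[X])
      ⟨z, hz, rfl⟩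
    rw [h0, spectrum.zero_eq] at h1
    simp only [eval_sub, eval_mul, eval_X, eval_C, Set.mem_singleton_iff] at h1
    have h2 : z * (z - lam) = 0 := by linear_combination h1
    simp only [Set.mem_insert_iff, Set.mem_singleton_iff]
    rcases mul_eq_zero.mp h2 with h' | h'
    · exact Or.inl h'
    · exact Or.inr (by linear_combination h')
  by_cases hlam : lam = 0
  · subst hlam
    have hσ : spectrum ℂ T = {0} :=
      Set.eq_singleton_iff_nonempty_unique_mem.mpr
        ⟨spectrum.nonempty T, fun z hz => by simpa using hsub hz⟩
    have hr : spectralRadius ℂ T = 0 := by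
      rw [spectralRadius, hσ]; simp
    ext z
    simp [periSpec, hσ, hr]
  · have hl := hmem hlam
    have hr : spectralRadius ℂ T = (‖lam‖₊ : ℝ≥0∞) := by
      apply le_antisymm
      · rw [spectralRadius]
        refine iSup₂_le fun z hz => ?_
        rcases hsub hz with h' | h' <;> subst h' <;> simp
      · rw [spectralRadius]
        exact le_iSup₂ (f := fun z (_ : z ∈ spectrum ℂ T) => (‖z‖₊ : ℝ≥0∞)) lam hl
    ext z
    simp only [periSpec, Set.mem_setOf_eq, Set.mem_singleton_iff, hr]
    constructor
    · rintro ⟨hz, hnz⟩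
      rcases hsub hz with h' | h'
      · exfalso
        subst h'
        simp only [nnnorm_zero, ENNReal.coe_zero] at hnz
        exact hlam (by simpa using hnz.symm)
      · exact h'
    · rintro rfl
      exact ⟨hl, rfl⟩

lemma mem_spectrum_smulRight {X : Type*} [NormedAddCommGroup X] [NormedSpace ℂ X]
    (g : X →L[ℂ] ℂ) (u : X) (h : g u ≠ 0) :
    g u ∈ spectrum ℂ (g.smulRight u) := by
  rw [spectrum.mem_iff]
  intro hunit
  have hu : u ≠ 0 := fun h0 => h (by simp [h0])
  set w := hunit.unit with hw
  have h2 : (↑w : X →L[ℂ] X) u = 0 := by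
    have hval : (↑w : X →L[ℂ] X) = algebraMap ℂ _ (g u) - g.smulRight u :=
      hunit.unit_spec
    rw [hval]
    simp [Algebra.algebraMap_eq_smul_one]
  have h1 : (↑w⁻¹ * ↑w : X →L[ℂ] X) = 1 := w.inv_mul
  have h3 := congrArg (fun S : X →L[ℂ] X => S u) h1
  simp only [ContinuousLinearMap.mul_apply, h2, map_zero,
    ContinuousLinearMap.one_apply] at h3
  exact hu h3.symm

lemma periSpec_smulRight {X : Type*} [NormedAddCommGroup X] [NormedSpace ℂ X]
    [CompleteSpace X] [Nontrivial X] (g : X →L[ℂ] ℂ) (u : X) :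
    periSpec (g.smulRight u) = {g u} := by
  refine periSpec_of_sq _ _ ?_ (mem_spectrum_smulRight g u)
  ext z
  simp [ContinuousLinearMap.mul_apply, smul_smul, mul_comm]

lemma pow_smulRight {X : Type*} [NormedAddCommGroup X] [NormedSpace ℂ X]
    (f : X →L[ℂ] ℂ) (x : X) (n : ℕ) :
    (f.smulRight x) ^ (n + 1) = (f x) ^ n • f.smulRight x := by
  induction n with
  | zero => simp
  | succ n ih =>
    have hsq : f.smulRight x * f.smulRight x = f x • f.smulRight x := by
      ext z; simp [ContinuousLinearMap.mul_apply, smul_smul, mul_comm]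
    rw [pow_succ, ih, smul_mul_assoc, hsq, smul_smul, pow_succ]

/-- For `x ∈ X`, `f ∈ X*` and a bounded operator `A` on a complex Banach space `X`,
the peripheral spectrum of `(x⊗f)^r A (x⊗f)^s` (with `r + s ≥ 1`) is the singleton
`{f(x)^(r+s-1) ⬝ f(Ax)}`, the trace of the rank-at-most-one operator `(x⊗f)^r A (x⊗f)^s`.
Here `x⊗f` is the rank-at-most-one operator `z ↦ f(z) • x`, realized as `f.smulRight x`. -/
theorem periSpec_rankOne_sandwich {X : Type*} [NormedAddCommGroup X] [NormedSpace ℂ X]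
    [CompleteSpace X] [Nontrivial X]
    (r s : ℕ) (hrs : 1 ≤ r + s) (x : X) (f : X →L[ℂ] ℂ) (A : X →L[ℂ] X) :
    periSpec ((f.smulRight x) ^ r * A * (f.smulRight x) ^ s)
      = {(f x) ^ (r + s - 1) * f (A x)} := by
  cases r with
  | zero =>
    cases s with
    | zero => omega
    | succ t =>
      have hT : (f.smulRight x) ^ 0 * A * (f.smulRight x) ^ (t + 1)
          = ((f x) ^ t • f).smulRight (A x) := by
        ext z
        simp [pow_smulRight, ContinuousLinearMap.mul_apply, smul_smul, mul_comm]
      rw [hT, periSpec_smulRight]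
      congr 1
      simp
  | succ a =>
    cases s with
    | zero =>
      have hT : (f.smulRight x) ^ (a + 1) * A * (f.smulRight x) ^ 0
          = ((f x) ^ a • (f.comp A)).smulRight x := by
        ext z
        simp [pow_smulRight, ContinuousLinearMap.mul_apply, smul_smul, mul_comm]
      rw [hT, periSpec_smulRight]
      congr 1
    | succ b =>
      have hT : (f.smulRight x) ^ (a + 1) * A * (f.smulRight x) ^ (b + 1)
          = (((f x) ^ a * (f x) ^ b * f (A x)) • f).smulRight x := by
        ext z
        simp [pow_smulRight, ContinuousLinearMap.mul_apply, smul_smul]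
        ring_nf
      rw [hT, periSpec_smulRight]
      congr 1
      have he : a + 1 + (b + 1) - 1 = a + b + 1 := by omega
      rw [he, pow_add, pow_succ]
      simp only [ContinuousLinearMap.smul_apply, smul_eq_mul]
      ring
end

section
/- Let A₁ and A₂ be standard operator algebras on complex Banach spaces X₁ and X₂ respectively, let r, s be nonnegative integers with r + s ≥ 1, and let Φ : A₁ → A₂ be a map whose range contains all operators of rank at most two and which satisfies σ_π(B^r A B^s) = σ_π(Φ(B)^r Φ(A) Φ(B)^s) for all A, B ∈ A₁. Then for every A ∈ A₁, Φ(A) = 0 if and only if A = 0. -/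
open scoped ENNReal

lemma eig_mem_periSpec {X : Type*} [NormedAddCommGroup X] [NormedSpace ℂ X] [CompleteSpace X]
    (T : X →L[ℂ] X) (lam : ℂ) (v : X) (hv : v ≠ 0)
    (hev : T v = lam • v) (hT2 : T * T = lam • T) :
    lam ∈ periSpec T := by
  have hmem : lam ∈ spectrum ℂ T := by
    rw [spectrum.mem_iff]
    intro hu
    have ha : (algebraMap ℂ (X →L[ℂ] X) lam - T) v = 0 := by
      simp [Algebra.algebraMap_eq_smul_one, hev]
    obtain ⟨u, hu'⟩ := hu
    have h2 : (↑u⁻¹ : X →L[ℂ] X) * (algebraMap ℂ (X →L[ℂ] X) lam - T) = 1 := by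
      rw [← hu']; exact u.inv_mul
    have h1 := DFunLike.congr_fun h2 v
    rw [ContinuousLinearMap.mul_apply, ha, map_zero] at h1
    exact hv (by simpa using h1.symm)
  have hsub : spectrum ℂ T ⊆ {0, lam} := by
    intro z hz
    by_contra h
    simp only [Set.mem_insert_iff, Set.mem_singleton_iff, not_or] at h
    obtain ⟨hz0, hzl⟩ := h
    apply (spectrum.notMem_iff.mpr ?_) hz
    refine isUnit_iff_exists.mpr ⟨z⁻¹ • 1 + (z⁻¹ * (z - lam)⁻¹) • T, ?_, ?_⟩
    · rw [Algebra.algebraMap_eq_smul_one]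
      have hzl' : z - lam ≠ 0 := sub_ne_zero.mpr hzl
      simp only [mul_add, add_mul, sub_mul, mul_sub, smul_mul_assoc, mul_smul_comm,
        one_mul, mul_one, hT2, smul_smul]
      match_scalars <;> field_simp <;> ring
    · rw [Algebra.algebraMap_eq_smul_one]
      have hzl' : z - lam ≠ 0 := sub_ne_zero.mpr hzl
      simp only [mul_add, add_mul, sub_mul, mul_sub, smul_mul_assoc, mul_smul_comm,
        one_mul, mul_one, hT2, smul_smul]
      match_scalars <;> field_simp <;> ring
  have hle : spectralRadius ℂ T ≤ (‖lam‖₊ : ℝ≥0∞) := by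
    refine iSup₂_le fun z hz => ?_
    rcases hsub hz with h | h <;> simp_all
  exact ⟨hmem, le_antisymm
    (le_iSup₂ (f := fun z (_ : z ∈ spectrum ℂ T) => (‖z‖₊ : ℝ≥0∞)) lam hmem) hle⟩

/-- rank of `f.smulRight x` is finite (at most the rank of `span {x}`). -/
lemma rank_smulRight_lt {X : Type*} [NormedAddCommGroup X] [NormedSpace ℂ X]
    (f : X →L[ℂ] ℂ) (x : X) :
    LinearMap.rank ((f.smulRight x : X →L[ℂ] X) : X →ₗ[ℂ] X) ≤ 1 := by
  have hsub : LinearMap.range ((f.smulRight x : X →L[ℂ] X) : X →ₗ[ℂ] X)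
      ≤ Submodule.span ℂ {x} := by
    rintro y ⟨v, rfl⟩
    exact Submodule.smul_mem _ _ (Submodule.mem_span_singleton_self x)
  calc LinearMap.rank ((f.smulRight x : X →L[ℂ] X) : X →ₗ[ℂ] X)
      ≤ Module.rank ℂ (Submodule.span ℂ ({x} : Set X)) := Submodule.rank_mono hsub
    _ ≤ Cardinal.mk ({x} : Set X) := rank_span_le _
    _ = 1 := by simp

/-- Key lemma: `f (M x)` is in the peripheral spectrum of `B^r * M * B^s` where
`B = f.smulRight x`, provided `f x = 1` and `r + s ≥ 1`. -/
lemma key_lemma {X : Type*} [NormedAddCommGroup X] [NormedSpace ℂ X] [CompleteSpace X]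
    (M : X →L[ℂ] X) (x : X) (f : X →L[ℂ] ℂ) (hfx : f x = 1)
    (hMx : M x ≠ 0)
    (r s : ℕ) (hrs : 1 ≤ r + s) :
    f (M x) ∈ periSpec ((f.smulRight x) ^ r * M * (f.smulRight x) ^ s) := by
  set B := f.smulRight x with hB
  set lam := f (M x) with hlam
  have hxne : x ≠ 0 := by
    intro h; rw [h] at hfx; simp at hfx
  have hBx : B x = x := by simp [hB, hfx]
  have hBapp : ∀ v : X, B v = f v • x := fun v => rfl
  have hB2 : B * B = B := by
    ext v
    simp [ContinuousLinearMap.mul_apply, hBapp, hfx, smul_smul]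
  have hBpow : ∀ n : ℕ, 1 ≤ n → B ^ n = B := by
    intro n hn
    induction n with
    | zero => omega
    | succ m ih =>
      rcases Nat.eq_or_lt_of_le hn with h | h
      · rw [← h]; simp
      · have hm : 1 ≤ m := by omega
        rw [pow_succ, ih hm, hB2]
  have hBMB : B * M * B = lam • B := by
    ext v
    simp [ContinuousLinearMap.mul_apply, hBapp, hlam, smul_smul, mul_comm]
  rcases Nat.eq_zero_or_pos r with hr | hr
  · -- r = 0, s ≥ 1 : T = M * B
    have hs : 1 ≤ s := by omega
    have hT : B ^ r * M * B ^ s = M * B := by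
      rw [hr, pow_zero, one_mul, hBpow s hs]
    rw [hT]
    refine eig_mem_periSpec _ _ (M x) hMx ?_ ?_
    · simp [ContinuousLinearMap.mul_apply, hBapp, hlam]
    · have : M * B * (M * B) = M * (B * M * B) := by simp only [mul_assoc]
      rw [this, hBMB]
      ext v
      simp [ContinuousLinearMap.mul_apply]
  · rcases Nat.eq_zero_or_pos s with hs | hs
    · -- s = 0 : T = B * M
      have hT : B ^ r * M * B ^ s = B * M := by
        rw [hs, pow_zero, mul_one, hBpow r hr]
      rw [hT]
      refine eig_mem_periSpec _ _ x hxne ?_ ?_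
      · simp [ContinuousLinearMap.mul_apply, hBapp, hfx, hlam, hBx]
      · have : B * M * (B * M) = (B * M * B) * M := by simp only [mul_assoc]
        rw [this, hBMB]
        ext v
        simp [ContinuousLinearMap.mul_apply]
    · -- r, s ≥ 1 : T = B * M * B = lam • B
      have hT : B ^ r * M * B ^ s = lam • B := by
        rw [hBpow r hr, hBpow s hs, hBMB]
      rw [hT]
      refine eig_mem_periSpec _ _ x hxne ?_ ?_
      · simp [hBx]
      · ext v
        simp [ContinuousLinearMap.mul_apply, hBapp, smul_smul, hB2, mul_comm]

lemma mem_periSpec_zero {X : Type*} [NormedAddCommGroup X] [NormedSpace ℂ X]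
    {z : ℂ} (hz : z ∈ periSpec (0 : X →L[ℂ] X)) : z = 0 := by
  have h := hz.2
  rw [spectrum.spectralRadius_zero] at h
  simpa using h

/-- Claim 1 in the proof of Theorem 2.2: if `Φ` is a map between standard operator algebras
whose range contains all operators of rank at most two and which preserves the peripheral
spectrum of the products `B^r A B^s` (`r + s ≥ 1`), then `Φ(A) = 0` iff `A = 0`. -/
theorem periSpec_sandwich_preserver_zero {X₁ X₂ : Type*}
    [NormedAddCommGroup X₁] [NormedSpace ℂ X₁] [CompleteSpace X₁]
    [NormedAddCommGroup X₂] [NormedSpace ℂ X₂] [CompleteSpace X₂]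
    (A₁ : NonUnitalSubalgebra ℂ (X₁ →L[ℂ] X₁))
    (A₂ : NonUnitalSubalgebra ℂ (X₂ →L[ℂ] X₂))
    (hA₁ : ∀ T : X₁ →L[ℂ] X₁, LinearMap.rank (T : X₁ →ₗ[ℂ] X₁) < Cardinal.aleph0 → T ∈ A₁)
    (hA₂ : ∀ T : X₂ →L[ℂ] X₂, LinearMap.rank (T : X₂ →ₗ[ℂ] X₂) < Cardinal.aleph0 → T ∈ A₂)
    (r s : ℕ) (hrs : 1 ≤ r + s)
    (Φ : A₁ → A₂)
    (hrange : ∀ T : X₂ →L[ℂ] X₂, LinearMap.rank (T : X₂ →ₗ[ℂ] X₂) ≤ 2 →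
      ∃ A : A₁, (Φ A : X₂ →L[ℂ] X₂) = T)
    (hpres : ∀ A B : A₁,
      periSpec ((B : X₁ →L[ℂ] X₁) ^ r * (A : X₁ →L[ℂ] X₁) * (B : X₁ →L[ℂ] X₁) ^ s)
        = periSpec ((Φ B : X₂ →L[ℂ] X₂) ^ r * (Φ A : X₂ →L[ℂ] X₂)
            * (Φ B : X₂ →L[ℂ] X₂) ^ s)) :
    ∀ A : A₁, Φ A = 0 ↔ A = 0 := by
  intro A
  constructor
  · intro hΦ
    by_contra hA
    have hA' : (A : X₁ →L[ℂ] X₁) ≠ 0 := fun h => hA (Subtype.ext h)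
    obtain ⟨x, hAx⟩ := DFunLike.ne_iff.mp hA'
    simp only [ContinuousLinearMap.zero_apply] at hAx
    have hxne : x ≠ 0 := fun h => hAx (by simp [h])
    obtain ⟨f, hfx, hfAx⟩ :=
      SeparatingDual.exists_eq_one_ne_zero_of_ne_zero_pair (R := ℂ) hxne hAx
    have hBmem : f.smulRight x ∈ A₁ :=
      hA₁ _ (lt_of_le_of_lt (rank_smulRight_lt f x) Cardinal.one_lt_aleph0)
    have hkey := key_lemma (A : X₁ →L[ℂ] X₁) x f hfx hAx r s hrs
    have heq := hpres A ⟨f.smulRight x, hBmem⟩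
    rw [heq] at hkey
    rw [hΦ] at hkey
    simp only [ZeroMemClass.coe_zero, mul_zero, zero_mul] at hkey
    exact hfAx (mem_periSpec_zero hkey)
  · intro hA
    subst hA
    by_contra hΦ
    have hΦ' : (Φ 0 : X₂ →L[ℂ] X₂) ≠ 0 := fun h => hΦ (Subtype.ext h)
    obtain ⟨x, hMx⟩ := DFunLike.ne_iff.mp hΦ'
    simp only [ContinuousLinearMap.zero_apply] at hMx
    have hxne : x ≠ 0 := fun h => hMx (by simp [h])
    obtain ⟨f, hfx, hfMx⟩ :=
      SeparatingDual.exists_eq_one_ne_zero_of_ne_zero_pair (R := ℂ) hxne hMx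
    obtain ⟨B, hB⟩ := hrange (f.smulRight x) ((rank_smulRight_lt f x).trans (by norm_num))
    have hkey := key_lemma ((Φ 0 : A₂) : X₂ →L[ℂ] X₂) x f hfx hMx r s hrs
    have heq := hpres 0 B
    rw [hB] at heq
    rw [← heq] at hkey
    simp only [ZeroMemClass.coe_zero, mul_zero, zero_mul] at hkey
    exact hfMx (mem_periSpec_zero hkey)
end

section
/- Let A₁ and A₂ be standard operator algebras on complex Banach spaces X₁ and X₂ of dimension at least two, let r, s be nonnegative integers with r + s ≥ 1, and let Φ : A₁ → A₂ be a map whose range contains all operators of rank at most two and which satisfies σ_π(B^r A B^s) = σ_π(Φ(B)^r Φ(A) Φ(B)^s) for all A, B ∈ A₁. Then Φ preserves rank-one operators in both directions: for every A ∈ A₁, A has rank one if and only if Φ(A) has rank one. -/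
/-!
A rank one operator has at most one nonzero spectral value, so every sandwich `S ^ r * T * S ^ s`
of a rank one `T` has a subsingleton peripheral spectrum, and a nonzero one for a suitable rank one
`S`. If `T` has rank at least two, one finds `x₁, x₂` and biorthogonal functionals `f₁, f₂` such
that the compression `(fᵢ (T xⱼ))` is upper triangular and invertible, with diagonal `a, c`; for
`S = x₁ ⊗ f₁ + μ x₂ ⊗ f₂` with `μ ^ (r + s) = -a / c` the sandwich then has the two peripheral
values `a` and `-a`. Since `A₁` and the range of `Φ` contain all operators of rank at most two and
`Φ` preserves these peripheral spectra, each of the two properties passes between `A` and `Φ A`.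
Nonzero spectral values of the finite-rank operators involved are eigenvalues by the Fredholm
alternative, and `S ^ r * T * S ^ s` has the same nonzero spectrum as `T * S ^ (r + s)`.
-/

open scoped ENNReal

theorem Submodule.exists_notMem_of_ne_top_of_ne_top {R M : Type*} [Ring R] [AddCommGroup M]
    [Module R M] {p q : Submodule R M} (hp : p ≠ ⊤) (hq : q ≠ ⊤) : ∃ x, x ∉ p ∧ x ∉ q := by
  obtain ⟨y, hy⟩ := SetLike.exists_not_mem_of_ne_top p hp
  obtain ⟨z, hz⟩ := SetLike.exists_not_mem_of_ne_top q hq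
  by_cases hyq : y ∈ q
  · by_cases hzp : z ∈ p
    · exact ⟨y + z, (p.add_mem_iff_left hzp).not.mpr hy, (q.add_mem_iff_right hyq).not.mpr hz⟩
    · exact ⟨z, hzp, hz⟩
  · exact ⟨y, hy, hyq⟩

theorem LinearMap.rank_eq_one_iff {K V W : Type*} [DivisionRing K] [AddCommGroup V] [Module K V]
    [AddCommGroup W] [Module K W] {f : V →ₗ[K] W} : rank f = 1 ↔ f ≠ 0 ∧ rank f ≤ 1 := by
  have h0 : rank f = 0 ↔ f = 0 := by
    rw [LinearMap.rank, Submodule.rank_eq_zero, LinearMap.range_eq_bot]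
  rw [le_antisymm_iff, Cardinal.one_le_iff_ne_zero, Ne, h0, and_comm]

theorem LinearMap.exists_apply_ne_zero_not_range_le_span_pair {K V : Type*} [Field K]
    [IsAlgClosed K] [AddCommGroup V] [Module K V] {T : V →ₗ[K] V} (hT : ¬ T.rank ≤ 1) :
    ∃ x, T x ≠ 0 ∧ ¬ T.range ≤ Submodule.span K {x, T x} := by
  by_contra! H
  -- Otherwise every `x ∉ ker T` lies in `range T`, so `T` maps onto the plane `span {u, T u}`,
  -- and an eigenvector `e` of `T` makes `span {e, T e}` a line containing `range T`
  have hline : ∀ y, ¬ T.range ≤ K ∙ y := fun y h =>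
    hT ((rank_submodule_le_one_iff' _).mpr ⟨y, h⟩)
  have hmem : ∀ x, T x ≠ 0 → x ∈ T.range := by
    intro x hx
    by_contra hxR
    refine hline (T x) ?_
    rintro _ ⟨w, rfl⟩
    obtain ⟨a, b, hab⟩ := Submodule.mem_span_pair.mp (H x hx ⟨w, rfl⟩)
    obtain rfl : a = 0 := by
      by_contra ha
      refine hxR ⟨a⁻¹ • (w - b • x), ?_⟩
      rw [map_smul, map_sub, map_smul, ← hab, add_sub_cancel_right, inv_smul_smul₀ ha]
    rw [← hab, zero_smul, zero_add]
    exact Submodule.smul_mem _ _ (Submodule.mem_span_singleton_self _)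
  have hsurj : T.range = ⊤ := by
    by_contra hR
    have hker : T.ker ≠ ⊤ := fun h => hline 0 (by simp [LinearMap.ker_eq_top.mp h])
    obtain ⟨x, hxk, hxR⟩ := Submodule.exists_notMem_of_ne_top_of_ne_top hker hR
    exact hxR (hmem x hxk)
  obtain ⟨u, hu⟩ : ∃ u, T u ≠ 0 := by
    by_contra! h
    exact hline 0 (by rintro _ ⟨w, rfl⟩; simp [h w])
  have : FiniteDimensional K (Submodule.span K {u, T u}) :=
    FiniteDimensional.span_of_finite K (Set.toFinite _)
  have : FiniteDimensional K V := Module.Finite.equiv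
    (LinearEquiv.ofTop _ (eq_top_iff.mpr (hsurj ▸ H u hu)))
  have : Nontrivial V := ⟨⟨u, 0, ne_zero_of_map hu⟩⟩
  obtain ⟨μ, hμ⟩ := Module.End.exists_eigenvalue T
  obtain ⟨e, he⟩ := hμ.exists_hasEigenvector
  have hTe : T e ≠ 0 :=
    (map_ne_zero_iff T (LinearMap.injective_iff_surjective.mpr (range_eq_top.mp hsurj))).mpr he.2
  refine hline e ((H e hTe).trans (Submodule.span_le.mpr ?_))
  rintro _ (rfl | rfl)
  · exact Submodule.mem_span_singleton_self _
  · rw [he.apply_eq_smul]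
    exact Submodule.smul_mem _ _ (Submodule.mem_span_singleton_self _)

theorem exists_strongDual_eq_zero_eq_one_ne_zero {𝕜 X : Type*} [RCLike 𝕜] [NormedAddCommGroup X]
    [NormedSpace 𝕜 X] (W : Submodule 𝕜 X) [FiniteDimensional 𝕜 W] {y z : X} (hy : y ∉ W)
    (hz : z ∉ W) : ∃ f : StrongDual 𝕜 X, (∀ w ∈ W, f w = 0) ∧ f y = 1 ∧ f z ≠ 0 := by
  have : IsClosed (W : Set X) := W.closed_of_finiteDimensional
  obtain ⟨g, hgy, hgz⟩ := SeparatingDual.exists_eq_one_ne_zero_of_ne_zero_pair (R := 𝕜)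
    (x := W.mkQ y) (y := W.mkQ z) (by simpa using hy) (by simpa using hz)
  exact ⟨g.comp W.mkQL, fun w hw => by simp [(Submodule.Quotient.mk_eq_zero W).mpr hw], hgy, hgz⟩

theorem isCompactOperator_of_rank_lt_aleph0 {𝕜 X Y : Type*} [RCLike 𝕜] [NormedAddCommGroup X]
    [NormedSpace 𝕜 X] [NormedAddCommGroup Y] [NormedSpace 𝕜 Y] (T : X →L[𝕜] Y)
    (hT : LinearMap.rank (T : X →ₗ[𝕜] Y) < Cardinal.aleph0) : IsCompactOperator T := by
  set R := LinearMap.range (T : X →ₗ[𝕜] Y)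
  have : FiniteDimensional 𝕜 R := Module.rank_lt_aleph0_iff.mp hT
  have : ProperSpace R := FiniteDimensional.proper 𝕜 R
  exact (isCompactOperator_of_locallyCompactSpace_dom
    (T.codRestrict R fun x => ⟨x, rfl⟩)).clm_comp R.subtypeL

theorem spectrum_zero_subset {A : Type*} [Ring A] [Algebra ℂ A] : spectrum ℂ (0 : A) ⊆ {0} := by
  nontriviality A
  rw [spectrum.zero_eq]

theorem spectralRadius_eq_iSup_diff_zero {A : Type*} [NormedRing A] [NormedAlgebra ℂ A] (a : A) :
    spectralRadius ℂ a = ⨆ z ∈ spectrum ℂ a \ {0}, (‖z‖₊ : ℝ≥0∞) := by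
  refine le_antisymm (iSup₂_le fun z hz => ?_) (iSup₂_le fun z hz =>
    le_iSup₂ (f := fun z (_ : z ∈ spectrum ℂ a) => (‖z‖₊ : ℝ≥0∞)) z hz.1)
  rcases eq_or_ne z 0 with rfl | hz0
  · simp
  · exact le_iSup₂ (f := fun z (_ : z ∈ spectrum ℂ a \ {0}) => (‖z‖₊ : ℝ≥0∞)) z ⟨hz, hz0⟩

section

variable {X : Type*} [NormedAddCommGroup X] [NormedSpace ℂ X]

theorem IsCompactOperator.mem_spectrum_iff_exists_apply_eq_smul [CompleteSpace X]
    {T : X →L[ℂ] X} (hT : IsCompactOperator T) {z : ℂ} (hz : z ≠ 0) :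
    z ∈ spectrum ℂ T ↔ ∃ w, w ≠ 0 ∧ T w = z • w := by
  rw [← hT.hasEigenvalue_iff_mem_spectrum hz]
  constructor
  · intro h
    obtain ⟨w, hw⟩ := h.exists_hasEigenvector
    exact ⟨w, hw.2, hw.apply_eq_smul⟩
  · rintro ⟨w, hw, hTw⟩
    exact Module.End.hasEigenvalue_of_hasEigenvector ⟨Module.End.mem_eigenspace_iff.mpr hTw, hw⟩

theorem rank_smulRight_le_one (f : StrongDual ℂ X) (y : X) :
    LinearMap.rank ((f.smulRight y : X →L[ℂ] X) : X →ₗ[ℂ] X) ≤ 1 :=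
  (rank_submodule_le_one_iff' _).mpr ⟨y, by
    rintro _ ⟨v, rfl⟩
    exact Submodule.smul_mem _ _ (Submodule.mem_span_singleton_self y)⟩

theorem rank_add_smulRight_le_two (f₁ f₂ : StrongDual ℂ X) (x₁ x₂ : X) :
    LinearMap.rank ((f₁.smulRight x₁ + f₂.smulRight x₂ : X →L[ℂ] X) : X →ₗ[ℂ] X) ≤ 2 :=
  (LinearMap.rank_add_le _ _).trans
    ((add_le_add (rank_smulRight_le_one f₁ x₁) (rank_smulRight_le_one f₂ x₂)).trans_eq
      one_add_one_eq_two)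

theorem rank_mul_mul_le (A B C : X →L[ℂ] X) :
    LinearMap.rank ((A * B * C : X →L[ℂ] X) : X →ₗ[ℂ] X) ≤ LinearMap.rank (B : X →ₗ[ℂ] X) :=
  (LinearMap.rank_comp_le_left (C : X →ₗ[ℂ] X) ((A : X →ₗ[ℂ] X) ∘ₗ (B : X →ₗ[ℂ] X))).trans
    (LinearMap.rank_comp_le_right _ _)

theorem mem_periSpec_of_forall_norm_le {T : X →L[ℂ] X} {c : ℂ} (hc : c ∈ spectrum ℂ T)
    (h : ∀ z ∈ spectrum ℂ T, ‖z‖₊ ≤ ‖c‖₊) : c ∈ periSpec T :=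
  ⟨hc, le_antisymm (le_iSup₂ (f := fun z (_ : z ∈ spectrum ℂ T) => (‖z‖₊ : ℝ≥0∞)) c hc)
    (iSup₂_le fun z hz => by exact_mod_cast h z hz)⟩

theorem mem_periSpec_of_spectrum_diff_zero_subsingleton {T : X →L[ℂ] X}
    (h : (spectrum ℂ T \ {0}).Subsingleton) {c : ℂ} (hc : c ∈ spectrum ℂ T) (hc0 : c ≠ 0) :
    c ∈ periSpec T :=
  mem_periSpec_of_forall_norm_le hc fun z hz => by
    rcases eq_or_ne z 0 with rfl | hz0
    · simp
    · rw [h ⟨hz, hz0⟩ ⟨hc, hc0⟩]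

theorem periSpec_subsingleton_of_spectrum_diff_zero_subsingleton {T : X →L[ℂ] X}
    (h : (spectrum ℂ T \ {0}).Subsingleton) : (periSpec T).Subsingleton := by
  rintro z ⟨hz, hzr⟩ w ⟨hw, hwr⟩
  have hnorm : ‖z‖₊ = ‖w‖₊ := by exact_mod_cast hzr.trans hwr.symm
  rcases eq_or_ne z 0 with rfl | hz0
  · simpa [eq_comm] using hnorm
  rcases eq_or_ne w 0 with rfl | hw0
  · simpa using hnorm
  exact h ⟨hz, hz0⟩ ⟨hw, hw0⟩

theorem mem_periSpec_iff_of_spectrum_diff_zero_eq {S T : X →L[ℂ] X}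
    (h : spectrum ℂ S \ {0} = spectrum ℂ T \ {0}) {z : ℂ} (hz : z ≠ 0) :
    z ∈ periSpec S ↔ z ∈ periSpec T := by
  have hS : z ∈ spectrum ℂ S ↔ z ∈ spectrum ℂ T := by
    simpa [hz] using congrArg (z ∈ ·) h
  simp only [periSpec, Set.mem_ofPred_eq, hS, spectralRadius_eq_iSup_diff_zero, h]

theorem mem_periSpec_mul_comm {S T : X →L[ℂ] X} {z : ℂ} (hz : z ≠ 0) :
    z ∈ periSpec (S * T) ↔ z ∈ periSpec (T * S) :=
  mem_periSpec_iff_of_spectrum_diff_zero_eq (spectrum.nonzero_mul_comm S T) hz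

theorem mem_periSpec_sandwich_iff (S T : X →L[ℂ] X) (r s : ℕ) {z : ℂ} (hz : z ≠ 0) :
    z ∈ periSpec (S ^ r * T * S ^ s) ↔ z ∈ periSpec (T * S ^ (r + s)) := by
  rw [mul_assoc, mem_periSpec_mul_comm hz, mul_assoc, ← pow_add, add_comm]

theorem spectrum_diff_zero_subsingleton_of_rank_le_one [CompleteSpace X] {T : X →L[ℂ] X}
    (h : LinearMap.rank (T : X →ₗ[ℂ] X) ≤ 1) : (spectrum ℂ T \ {0}).Subsingleton := by
  obtain ⟨y, hy⟩ := (rank_submodule_le_one_iff' _).mp h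
  have hT := isCompactOperator_of_rank_lt_aleph0 T (h.trans_lt Cardinal.one_lt_aleph0)
  -- an eigenvector for a nonzero eigenvalue lies in the range, i.e. on the line through `y`
  have key : ∀ z ∈ spectrum ℂ T \ {0}, y ≠ 0 ∧ T y = z • y := by
    rintro z ⟨hz, hz0⟩
    obtain ⟨w, hw, hTw⟩ := (hT.mem_spectrum_iff_exists_apply_eq_smul hz0).mp hz
    have hzw : z • w ∈ ℂ ∙ y := hTw ▸ hy ⟨w, rfl⟩
    obtain ⟨c, rfl⟩ := Submodule.mem_span_singleton.mp ((Submodule.smul_mem_iff _ hz0).mp hzw)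
    have hc : c ≠ 0 := by rintro rfl; simp at hw
    refine ⟨right_ne_zero_of_smul hw, smul_right_injective X hc ?_⟩
    simpa [smul_comm c z] using hTw
  intro z hz z' hz'
  exact smul_left_injective ℂ (key z hz).1 ((key z hz).2.symm.trans (key z' hz').2)

theorem periSpec_sandwich_subsingleton [CompleteSpace X] {A : X →L[ℂ] X}
    (hA : LinearMap.rank (A : X →ₗ[ℂ] X) ≤ 1) (B : X →L[ℂ] X) (r s : ℕ) :
    (periSpec (B ^ r * A * B ^ s)).Subsingleton :=
  periSpec_subsingleton_of_spectrum_diff_zero_subsingleton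
    (spectrum_diff_zero_subsingleton_of_rank_le_one ((rank_mul_mul_le _ _ _).trans hA))

theorem exists_rank_le_one_mem_periSpec_sandwich_ne_zero [CompleteSpace X] {T : X →L[ℂ] X}
    (hT : (T : X →ₗ[ℂ] X) ≠ 0) (r s : ℕ) (hrs : r + s ≠ 0) :
    ∃ S : X →L[ℂ] X, LinearMap.rank (S : X →ₗ[ℂ] X) ≤ 1 ∧
      ∃ c ≠ 0, c ∈ periSpec (S ^ r * T * S ^ s) := by
  obtain ⟨u, hu⟩ : ∃ u, T u ≠ 0 := by simpa using DFunLike.ne_iff.mp hT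
  obtain ⟨f, hfu, hfTu⟩ : ∃ f : StrongDual ℂ X, f u = 1 ∧ f (T u) ≠ 0 :=
    SeparatingDual.exists_eq_one_ne_zero_of_ne_zero_pair (ne_zero_of_map hu) hu
  set S := f.smulRight u
  have hS : IsIdempotentElem S := by ext; simp [S, hfu]
  have hTS : LinearMap.rank ((T * S : X →L[ℂ] X) : X →ₗ[ℂ] X) ≤ 1 :=
    (LinearMap.rank_comp_le_right _ _).trans (rank_smulRight_le_one f u)
  have hTSu : (T * S) (T u) = f (T u) • T u := by simp [S]
  refine ⟨S, rank_smulRight_le_one f u, f (T u), hfTu, ?_⟩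
  rw [mem_periSpec_sandwich_iff _ _ _ _ hfTu, ← Nat.succ_pred_eq_of_ne_zero hrs,
    hS.pow_succ_eq]
  have hK := isCompactOperator_of_rank_lt_aleph0 _ (hTS.trans_lt Cardinal.one_lt_aleph0)
  exact mem_periSpec_of_spectrum_diff_zero_subsingleton
    (spectrum_diff_zero_subsingleton_of_rank_le_one hTS)
    ((hK.mem_spectrum_iff_exists_apply_eq_smul hfTu).mpr ⟨T u, hu, hTSu⟩) hfTu

theorem spectrum_smulRight_add_smulRight_subset [CompleteSpace X] {g₁ g₂ : StrongDual ℂ X}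
    {y₁ y₂ : X} {a : ℂ} (h₁₁ : g₁ y₁ = a) (h₂₁ : g₂ y₁ = 0) (h₂₂ : g₂ y₂ = -a) :
    spectrum ℂ (g₁.smulRight y₁ + g₂.smulRight y₂) ⊆ {0, a, -a} := by
  set R := g₁.smulRight y₁ + g₂.smulRight y₂
  have hR : IsCompactOperator R := isCompactOperator_of_rank_lt_aleph0 R
    ((rank_add_smulRight_le_two g₁ g₂ y₁ y₂).trans_lt Cardinal.ofNat_lt_aleph0)
  intro z hz
  rcases eq_or_ne z 0 with hz0 | hz0
  · exact Or.inl hz0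
  obtain ⟨w, hw, hRw⟩ := (hR.mem_spectrum_iff_exists_apply_eq_smul hz0).mp hz
  change g₁ w • y₁ + g₂ w • y₂ = z • w at hRw
  have e₂ := congrArg g₂ hRw
  simp only [map_add, map_smul, h₂₁, h₂₂, smul_eq_mul] at e₂
  by_cases hg₂ : g₂ w = 0
  · have e₁ := congrArg g₁ hRw
    simp only [map_add, map_smul, h₁₁, hg₂, smul_eq_mul] at e₁
    have hg₁ : g₁ w ≠ 0 := by
      rintro hg₁
      simp only [hg₁, hg₂, zero_smul, add_zero] at hRw
      exact hw ((smul_eq_zero.mp hRw.symm).resolve_left hz0)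
    exact Or.inr (Or.inl (mul_right_cancel₀ hg₁ (by linear_combination -e₁)))
  · exact Or.inr (Or.inr (mul_right_cancel₀ hg₂ (by linear_combination -e₂)))

theorem mem_periSpec_smulRight_add_smulRight [CompleteSpace X] {g₁ g₂ : StrongDual ℂ X}
    {y₁ y₂ : X} {a : ℂ} (ha : a ≠ 0) (h₁₁ : g₁ y₁ = a) (h₂₁ : g₂ y₁ = 0) (h₂₂ : g₂ y₂ = -a) :
    a ∈ periSpec (g₁.smulRight y₁ + g₂.smulRight y₂) ∧
      -a ∈ periSpec (g₁.smulRight y₁ + g₂.smulRight y₂) := by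
  set R := g₁.smulRight y₁ + g₂.smulRight y₂
  have hR : IsCompactOperator R := isCompactOperator_of_rank_lt_aleph0 R
    ((rank_add_smulRight_le_two g₁ g₂ y₁ y₂).trans_lt Cardinal.ofNat_lt_aleph0)
  have hbound : ∀ b : ℂ, ‖b‖₊ = ‖a‖₊ → ∀ z ∈ spectrum ℂ R, ‖z‖₊ ≤ ‖b‖₊ := by
    intro b hb z hz
    rcases spectrum_smulRight_add_smulRight_subset h₁₁ h₂₁ h₂₂ hz with rfl | rfl | rfl <;>
      simp [hb]
  have hy₁ : R y₁ = a • y₁ := by simp [R, h₁₁, h₂₁]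
  set w := y₂ - (g₁ y₂ / (2 * a)) • y₁
  have hw : R w = (-a) • w := by
    simp only [R, w, add_apply, ContinuousLinearMap.smulRight_apply, map_sub, map_smul, h₁₁, h₂₁,
      h₂₂]
    match_scalars <;> field_simp <;> ring
  have hy₁0 : y₁ ≠ 0 := by rintro rfl; simp [eq_comm, ha] at h₁₁
  have hw0 : w ≠ 0 := by
    rintro hw0
    simpa [w, h₂₁, h₂₂, ha] using congrArg g₂ hw0
  have hmem : ∀ b ≠ (0 : ℂ), ∀ v ≠ 0, R v = b • v → b ∈ spectrum ℂ R :=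
    fun b hb v hv hRv => (hR.mem_spectrum_iff_exists_apply_eq_smul hb).mpr ⟨v, hv, hRv⟩
  exact ⟨mem_periSpec_of_forall_norm_le (hmem a ha y₁ hy₁0 hy₁) (hbound a rfl),
    mem_periSpec_of_forall_norm_le (hmem (-a) (neg_ne_zero.mpr ha) w hw0 hw)
      (hbound (-a) (nnnorm_neg a))⟩

theorem pow_smulRight_add_smulRight {f₁ f₂ : StrongDual ℂ X} {x₁ x₂ : X} (h₁₁ : f₁ x₁ = 1)
    (h₁₂ : f₁ x₂ = 0) (h₂₁ : f₂ x₁ = 0) (h₂₂ : f₂ x₂ = 1) (μ : ℂ) {n : ℕ} (hn : n ≠ 0) :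
    (f₁.smulRight x₁ + (μ • f₂).smulRight x₂) ^ n =
      f₁.smulRight x₁ + (μ ^ n • f₂).smulRight x₂ := by
  induction n with
  | zero => exact absurd rfl hn
  | succ m ih =>
    rcases eq_or_ne m 0 with rfl | hm
    · simp
    rw [pow_succ, ih hm]
    ext w
    simp [h₁₁, h₁₂, h₂₁, h₂₂, pow_succ, mul_assoc]

-- the compression `(fᵢ (T xⱼ))` of `T` to the biorthogonal system `(xᵢ, fᵢ)` is upper triangular
-- and invertible
def HasTriangularCompression (T : X →L[ℂ] X) : Prop :=
  ∃ (x₁ x₂ : X) (f₁ f₂ : StrongDual ℂ X), f₁ x₁ = 1 ∧ f₁ x₂ = 0 ∧ f₂ x₁ = 0 ∧ f₂ x₂ = 1 ∧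
    f₂ (T x₁) = 0 ∧ f₁ (T x₁) ≠ 0 ∧ f₂ (T x₂) ≠ 0

theorem hasTriangularCompression_of_not_rank_le_one {T : X →L[ℂ] X}
    (hT : ¬ LinearMap.rank (T : X →ₗ[ℂ] X) ≤ 1) : HasTriangularCompression T := by
  obtain ⟨x, hx, hR⟩ := LinearMap.exists_apply_ne_zero_not_range_le_span_pair hT
  set U := Submodule.span ℂ {x, T x}
  have hU : U ≠ ⊤ := fun h => hR (h ▸ le_top : _ ≤ U)
  have hTU : U.comap (T : X →ₗ[ℂ] X) ≠ ⊤ := fun h => hR <| by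
    rintro _ ⟨w, rfl⟩
    exact Submodule.mem_comap.mp (h ▸ Submodule.mem_top : w ∈ U.comap (T : X →ₗ[ℂ] X))
  have : FiniteDimensional ℂ U := FiniteDimensional.span_of_finite ℂ (Set.toFinite _)
  obtain ⟨x₂, hx₂, hTx₂⟩ := Submodule.exists_notMem_of_ne_top_of_ne_top hU hTU
  obtain ⟨f₂, hf₂U, hf₂x₂, hf₂Tx₂⟩ :=
    exists_strongDual_eq_zero_eq_one_ne_zero U hx₂ (Submodule.mem_comap.not.mp hTx₂)
  have hnotMem : ∀ v ∈ U, v ≠ 0 → v ∉ ℂ ∙ x₂ := by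
    intro v hv hv0 hvx₂
    obtain ⟨c, rfl⟩ := Submodule.mem_span_singleton.mp hvx₂
    have hc : c ≠ 0 := by rintro rfl; simp at hv0
    exact hx₂ ((U.smul_mem_iff hc).mp hv)
  obtain ⟨f₁, hf₁x₂, hf₁x, hf₁Tx⟩ := exists_strongDual_eq_zero_eq_one_ne_zero (ℂ ∙ x₂)
    (hnotMem x (Submodule.subset_span (by simp)) (ne_zero_of_map hx))
    (hnotMem (T x) (Submodule.subset_span (by simp)) hx)
  exact ⟨x, x₂, f₁, f₂, hf₁x, hf₁x₂ _ (Submodule.mem_span_singleton_self _),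
    hf₂U _ (Submodule.subset_span (by simp)), hf₂x₂, hf₂U _ (Submodule.subset_span (by simp)),
    hf₁Tx, hf₂Tx₂⟩

theorem HasTriangularCompression.exists_periSpec_sandwich_nontrivial [CompleteSpace X]
    {T : X →L[ℂ] X} (hT : HasTriangularCompression T) (r s : ℕ) (hrs : r + s ≠ 0) :
    ∃ S : X →L[ℂ] X, LinearMap.rank (S : X →ₗ[ℂ] X) ≤ 2 ∧
      (periSpec (S ^ r * T * S ^ s)).Nontrivial := by
  obtain ⟨x₁, x₂, f₁, f₂, h₁₁, h₁₂, h₂₁, h₂₂, hT₂₁, ha, hc⟩ := hT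
  set a := f₁ (T x₁)
  set c := f₂ (T x₂)
  -- `μ` is chosen so that `T * S ^ (r + s)` has the eigenvalues `a` and `-a`
  obtain ⟨μ, hμ⟩ := IsAlgClosed.exists_pow_nat_eq (-a / c) (Nat.pos_of_ne_zero hrs)
  set S := f₁.smulRight x₁ + (μ • f₂).smulRight x₂
  have hTS : T * S ^ (r + s) = f₁.smulRight (T x₁) + ((-a / c) • f₂).smulRight (T x₂) := by
    rw [pow_smulRight_add_smulRight h₁₁ h₁₂ h₂₁ h₂₂ μ hrs, hμ]
    ext w
    simp
  obtain ⟨ha_mem, hna_mem⟩ := mem_periSpec_smulRight_add_smulRight (y₁ := T x₁) (y₂ := T x₂)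
    (g₁ := f₁) (g₂ := (-a / c) • f₂) ha rfl (by simp [hT₂₁]) (by simp [c, hc])
  refine ⟨S, rank_add_smulRight_le_two _ _ _ _, a, ?_, -a, ?_, ?_⟩
  · rw [mem_periSpec_sandwich_iff _ _ _ _ ha, hTS]
    exact ha_mem
  · rw [mem_periSpec_sandwich_iff _ _ _ _ (neg_ne_zero.mpr ha), hTS]
    exact hna_mem
  · exact fun h => ha (CharZero.eq_neg_self_iff.mp h)

end

theorem rank_eq_one_of_periSpec_sandwich_correspondence {X Y : Type*}
    [NormedAddCommGroup X] [NormedSpace ℂ X] [CompleteSpace X]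
    [NormedAddCommGroup Y] [NormedSpace ℂ Y] [CompleteSpace Y] {r s : ℕ} (hrs : r + s ≠ 0)
    {T₁ : X →L[ℂ] X} {T₂ : Y →L[ℂ] Y} (hT₁ : LinearMap.rank (T₁ : X →ₗ[ℂ] X) = 1)
    (h₁₂ : ∀ S₁ : X →L[ℂ] X, LinearMap.rank (S₁ : X →ₗ[ℂ] X) ≤ 2 →
      ∃ S₂ : Y →L[ℂ] Y, periSpec (S₁ ^ r * T₁ * S₁ ^ s) = periSpec (S₂ ^ r * T₂ * S₂ ^ s))
    (h₂₁ : ∀ S₂ : Y →L[ℂ] Y, LinearMap.rank (S₂ : Y →ₗ[ℂ] Y) ≤ 2 →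
      ∃ S₁ : X →L[ℂ] X, periSpec (S₂ ^ r * T₂ * S₂ ^ s) = periSpec (S₁ ^ r * T₁ * S₁ ^ s)) :
    LinearMap.rank (T₂ : Y →ₗ[ℂ] Y) = 1 := by
  rw [LinearMap.rank_eq_one_iff] at hT₁ ⊢
  refine ⟨?_, ?_⟩
  · obtain ⟨S₁, hS₁, c, hc, hcmem⟩ := exists_rank_le_one_mem_periSpec_sandwich_ne_zero hT₁.1 r s hrs
    obtain ⟨S₂, hS₂⟩ := h₁₂ S₁ (hS₁.trans one_le_two)
    intro hT₂
    rw [hS₂, ContinuousLinearMap.coe_injective (a₁ := T₂) (a₂ := 0) hT₂, mul_zero,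
      zero_mul] at hcmem
    exact hc (spectrum_zero_subset hcmem.1)
  · by_contra h
    obtain ⟨S₂, hS₂, hnt⟩ :=
      (hasTriangularCompression_of_not_rank_le_one h).exists_periSpec_sandwich_nontrivial r s hrs
    obtain ⟨S₁, hS₁⟩ := h₂₁ S₂ hS₂
    exact (hS₁ ▸ hnt).not_subsingleton (periSpec_sandwich_subsingleton hT₁.2 S₁ r s)

theorem periSpec_sandwich_preserver_rankOne_general {X₁ X₂ : Type*}
    [NormedAddCommGroup X₁] [NormedSpace ℂ X₁] [CompleteSpace X₁]
    [NormedAddCommGroup X₂] [NormedSpace ℂ X₂] [CompleteSpace X₂]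
    (A₁ : NonUnitalSubalgebra ℂ (X₁ →L[ℂ] X₁))
    (A₂ : NonUnitalSubalgebra ℂ (X₂ →L[ℂ] X₂))
    (hA₁ : ∀ T : X₁ →L[ℂ] X₁, LinearMap.rank (T : X₁ →ₗ[ℂ] X₁) < Cardinal.aleph0 → T ∈ A₁)
    (r s : ℕ) (hrs : 1 ≤ r + s)
    (Φ : A₁ → A₂)
    (hrange : ∀ T : X₂ →L[ℂ] X₂, LinearMap.rank (T : X₂ →ₗ[ℂ] X₂) ≤ 2 →
      ∃ A : A₁, (Φ A : X₂ →L[ℂ] X₂) = T)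
    (hpres : ∀ A B : A₁,
      periSpec ((B : X₁ →L[ℂ] X₁) ^ r * (A : X₁ →L[ℂ] X₁) * (B : X₁ →L[ℂ] X₁) ^ s)
        = periSpec ((Φ B : X₂ →L[ℂ] X₂) ^ r * (Φ A : X₂ →L[ℂ] X₂)
            * (Φ B : X₂ →L[ℂ] X₂) ^ s)) :
    ∀ A : A₁, LinearMap.rank ((A : X₁ →L[ℂ] X₁) : X₁ →ₗ[ℂ] X₁) = 1
      ↔ LinearMap.rank ((Φ A : X₂ →L[ℂ] X₂) : X₂ →ₗ[ℂ] X₂) = 1 := by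
  intro A
  have hrs' : r + s ≠ 0 := Nat.one_le_iff_ne_zero.mp hrs
  have h₁₂ : ∀ S : X₁ →L[ℂ] X₁, LinearMap.rank (S : X₁ →ₗ[ℂ] X₁) ≤ 2 →
      ∃ S' : X₂ →L[ℂ] X₂, periSpec (S ^ r * (A : X₁ →L[ℂ] X₁) * S ^ s)
        = periSpec (S' ^ r * (Φ A : X₂ →L[ℂ] X₂) * S' ^ s) :=
    fun S hS => ⟨_, hpres A ⟨S, hA₁ S (hS.trans_lt Cardinal.ofNat_lt_aleph0)⟩⟩
  have h₂₁ : ∀ S : X₂ →L[ℂ] X₂, LinearMap.rank (S : X₂ →ₗ[ℂ] X₂) ≤ 2 →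
      ∃ S' : X₁ →L[ℂ] X₁, periSpec (S ^ r * (Φ A : X₂ →L[ℂ] X₂) * S ^ s)
        = periSpec (S' ^ r * (A : X₁ →L[ℂ] X₁) * S' ^ s) := by
    intro S hS
    obtain ⟨B, rfl⟩ := hrange S hS
    exact ⟨B, (hpres A B).symm⟩
  exact ⟨fun h => rank_eq_one_of_periSpec_sandwich_correspondence hrs' h h₁₂ h₂₁,
    fun h => rank_eq_one_of_periSpec_sandwich_correspondence hrs' h h₂₁ h₁₂⟩

/-- Claim 2 in the proof of Theorem 2.2: if `Φ` is a map between standard operator algebras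
on complex Banach spaces of dimension at least two whose range contains all operators of
rank at most two and which preserves the peripheral spectrum of the products `B^r A B^s`
(`r + s ≥ 1`), then `Φ` preserves rank-one operators in both directions. -/
theorem periSpec_sandwich_preserver_rankOne {X₁ X₂ : Type*}
    [NormedAddCommGroup X₁] [NormedSpace ℂ X₁] [CompleteSpace X₁]
    [NormedAddCommGroup X₂] [NormedSpace ℂ X₂] [CompleteSpace X₂]
    (hdim₁ : 2 ≤ Module.rank ℂ X₁) (hdim₂ : 2 ≤ Module.rank ℂ X₂)
    (A₁ : NonUnitalSubalgebra ℂ (X₁ →L[ℂ] X₁))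
    (A₂ : NonUnitalSubalgebra ℂ (X₂ →L[ℂ] X₂))
    (hA₁ : ∀ T : X₁ →L[ℂ] X₁, LinearMap.rank (T : X₁ →ₗ[ℂ] X₁) < Cardinal.aleph0 → T ∈ A₁)
    (hA₂ : ∀ T : X₂ →L[ℂ] X₂, LinearMap.rank (T : X₂ →ₗ[ℂ] X₂) < Cardinal.aleph0 → T ∈ A₂)
    (r s : ℕ) (hrs : 1 ≤ r + s)
    (Φ : A₁ → A₂)
    (hrange : ∀ T : X₂ →L[ℂ] X₂, LinearMap.rank (T : X₂ →ₗ[ℂ] X₂) ≤ 2 →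
      ∃ A : A₁, (Φ A : X₂ →L[ℂ] X₂) = T)
    (hpres : ∀ A B : A₁,
      periSpec ((B : X₁ →L[ℂ] X₁) ^ r * (A : X₁ →L[ℂ] X₁) * (B : X₁ →L[ℂ] X₁) ^ s)
        = periSpec ((Φ B : X₂ →L[ℂ] X₂) ^ r * (Φ A : X₂ →L[ℂ] X₂)
            * (Φ B : X₂ →L[ℂ] X₂) ^ s)) :
    ∀ A : A₁, LinearMap.rank ((A : X₁ →L[ℂ] X₁) : X₁ →ₗ[ℂ] X₁) = 1
      ↔ LinearMap.rank ((Φ A : X₂ →L[ℂ] X₂) : X₂ →ₗ[ℂ] X₂) = 1 :=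
  periSpec_sandwich_preserver_rankOne_general A₁ A₂ hA₁ r s hrs Φ hrange hpres
end

section
/- Let A₁ and A₂ be standard operator algebras on complex Banach spaces X₁ and X₂ of dimension at least two, let r, s be nonnegative integers with r + s ≥ 1, and let Φ : A₁ → A₂ be a map whose range contains all operators of rank at most two and which satisfies σ_π(B^r A B^s) = σ_π(Φ(B)^r Φ(A) Φ(B)^s) for all A, B ∈ A₁. Then Φ is linear, i.e. Φ(A + B) = Φ(A) + Φ(B) and Φ(αA) = αΦ(A) for all A, B ∈ A₁ and all α ∈ ℂ; consequently Φ is injective. -/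
open scoped ENNReal

/-!
For a rank-one idempotent `Q = g.smulRight y` (`g y = 1`) the peripheral spectrum of
`Q ^ r * A * Q ^ s` is `{g (A y)}`: moving `Q ^ s` to the front does not change the peripheral
spectrum, and `Q ^ (r + s) * A = Q * A` is a rank-one operator. Choosing `B` with `Φ B = Q`,
every `B ^ r * A * B ^ s` therefore has a one-point peripheral spectrum `{g (Φ A y)}`. This forces
`B ^ (r + s)` to be of the form `x ↦ φ x • w`: if its range contained two independent vectors,
a rank-two `A` would put both `1` and `-1` into the peripheral spectrum. Hence
`g (Φ A y) = φ (A w)` is linear in `A`, and since the functionals `A ↦ g (A y)` with `g y = 1`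
separate operators, `Φ` is linear. The same separation, applied on the domain side to the
sandwiches by rank-one idempotents, gives injectivity.
-/

open scoped Cardinal

section Algebra

variable {𝕜 A : Type*}

theorem spectrum.isRoot_of_aeval_eq_zero [Field 𝕜] [Ring A] [Algebra 𝕜 A] {a : A}
    {p : Polynomial 𝕜} (hp : Polynomial.aeval a p = 0) {z : 𝕜} (hz : z ∈ spectrum 𝕜 a) :
    p.IsRoot z := by
  rcases subsingleton_or_nontrivial A with hA | hA
  · simp [spectrum.of_subsingleton] at hz
  · simpa [hp, spectrum.zero_eq] using spectrum.subset_polynomial_aeval a p ⟨z, hz, rfl⟩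

theorem spectralRadius_mul_comm [NormedField 𝕜] [Ring A] [Algebra 𝕜 A] (a b : A) :
    spectralRadius 𝕜 (a * b) = spectralRadius 𝕜 (b * a) := by
  have key : ∀ a b : A, spectralRadius 𝕜 (a * b) ≤ spectralRadius 𝕜 (b * a) := by
    refine fun a b => iSup₂_le fun z hz => ?_
    rcases eq_or_ne z 0 with rfl | hz0
    · simp
    · have : z ∈ spectrum 𝕜 (b * a) \ {0} :=
        spectrum.nonzero_mul_comm (𝕜 := 𝕜) a b ▸ ⟨hz, hz0⟩
      exact le_iSup₂ (f := fun k (_ : k ∈ spectrum 𝕜 (b * a)) => (‖k‖₊ : ℝ≥0∞)) z this.1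
  exact le_antisymm (key a b) (key b a)

end Algebra

section Dual

variable {R V : Type*} [Field R] [TopologicalSpace R] [IsTopologicalRing R]
  [AddCommGroup V] [TopologicalSpace V] [Module R V] [SeparatingDual R V]

theorem SeparatingDual.exists_biorthogonal {ι : Type*} [Fintype ι] [DecidableEq ι] {v : ι → V}
    (hv : LinearIndependent R v) :
    ∃ f : ι → StrongDual R V, ∀ i j, f i (v j) = (Pi.single j 1 : ι → R) i := by
  have hsurj := (SeparatingDual.dualMap_surjective_iff (R := R)).mpr
    hv.fintypeLinearCombination_injective
  choose f hf using fun i => hsurj (LinearMap.proj i)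
  refine ⟨f, fun i j => ?_⟩
  have := LinearMap.congr_fun (hf i) (Pi.single j 1)
  simpa using this

theorem ContinuousLinearMap.ext_of_forall_dual {T T' : V →L[R] V}
    (h : ∀ (y : V) (g : StrongDual R V), g y = 1 → g (T y) = g (T' y)) : T = T' := by
  ext y
  by_contra hne
  have hy : y ≠ 0 := by rintro rfl; simp at hne
  obtain ⟨g, hgy, hg⟩ :=
    SeparatingDual.exists_eq_one_ne_zero_of_ne_zero_pair (R := R) hy (sub_ne_zero.mpr hne)
  exact hg (by rw [map_sub, h y g hgy, sub_self])

theorem isLinearMap_of_forall_dual {M : Type*} [AddCommGroup M] [Module R M]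
    [ContinuousAdd V] [ContinuousConstSMul R V] {Φ : M → V →L[R] V}
    (h : ∀ (y : V) (g : StrongDual R V), g y = 1 → ∃ ℓ : M →ₗ[R] R, ∀ A, g (Φ A y) = ℓ A) :
    IsLinearMap R Φ := by
  constructor
  · refine fun A B => ContinuousLinearMap.ext_of_forall_dual fun y g hgy => ?_
    obtain ⟨ℓ, hℓ⟩ := h y g hgy
    simp [hℓ]
  · refine fun c A => ContinuousLinearMap.ext_of_forall_dual fun y g hgy => ?_
    obtain ⟨ℓ, hℓ⟩ := h y g hgy
    simp [hℓ]

end Dual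

theorem LinearMap.exists_eq_smul_of_forall_mem_span_singleton {R V W : Type*} [Ring R]
    [IsDomain R] [AddCommGroup V] [Module R V] [AddCommGroup W] [Module R W]
    [Module.IsTorsionFree R W] (f : V →ₗ[R] W) {w : W} (hw : w ≠ 0) (h : ∀ x, f x ∈ R ∙ w) :
    ∃ φ : V →ₗ[R] R, ∀ x, f x = φ x • w :=
  ⟨(LinearEquiv.coord R W w hw).toLinearMap ∘ₗ f.codRestrict _ h,
    fun x => (LinearEquiv.coord_apply_smul R W w hw ⟨f x, h x⟩).symm⟩

theorem ContinuousLinearMap.rank_smulRight_le_one {K V : Type*} [Field K] [TopologicalSpace K]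
    [AddCommGroup V] [TopologicalSpace V] [Module K V] [ContinuousSMul K V]
    (g : StrongDual K V) (y : V) : LinearMap.rank (g.smulRight y : V →ₗ[K] V) ≤ 1 := by
  have hrange : LinearMap.range (g.smulRight y : V →ₗ[K] V) ≤ K ∙ y := by
    rintro _ ⟨x, rfl⟩
    exact Submodule.mem_span_singleton.mpr ⟨g x, rfl⟩
  calc LinearMap.rank (g.smulRight y : V →ₗ[K] V) ≤ Module.rank K (K ∙ y) :=
        Submodule.rank_mono hrange
    _ ≤ Cardinal.mk ({y} : Set V) := rank_span_le _
    _ = 1 := Cardinal.mk_singleton y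

section Operator

variable {E : Type*} [NormedAddCommGroup E] [NormedSpace ℂ E]

theorem mem_periSpec_of_forall_nnnorm_le {T : E →L[ℂ] E} {z : ℂ} (hz : z ∈ spectrum ℂ T)
    (h : ∀ k ∈ spectrum ℂ T, ‖k‖₊ ≤ ‖z‖₊) : z ∈ periSpec T := by
  refine ⟨hz, le_antisymm ?_ (iSup₂_le fun k hk => by exact_mod_cast h k hk)⟩
  exact le_iSup₂ (f := fun k (_ : k ∈ spectrum ℂ T) => (‖k‖₊ : ℝ≥0∞)) z hz

theorem periSpec_eq_singleton {T : E →L[ℂ] E} {μ : ℂ} (hμ : μ ∈ spectrum ℂ T)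
    (h : spectrum ℂ T ⊆ {0, μ}) : periSpec T = {μ} := by
  have hμT : μ ∈ periSpec T := mem_periSpec_of_forall_nnnorm_le hμ fun k hk => by
    rcases h hk with rfl | rfl <;> simp
  refine Set.eq_singleton_iff_unique_mem.mpr ⟨hμT, fun z ⟨hz, hzr⟩ => ?_⟩
  rcases h hz with rfl | rfl
  · rw [← hμT.2] at hzr
    simpa [eq_comm] using hzr
  · rfl

theorem periSpec_subset_zero : periSpec (0 : E →L[ℂ] E) ⊆ {0} := fun z hz => by
  simpa using spectrum.isRoot_of_aeval_eq_zero (p := Polynomial.X) (by simp) hz.1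

variable [CompleteSpace E]

theorem mem_spectrum_of_apply_eq_smul {T : E →L[ℂ] E} {w : E} {μ : ℂ}
    (hw : w ≠ 0) (h : T w = μ • w) : μ ∈ spectrum ℂ T := by
  rw [ContinuousLinearMap.spectrum_eq]
  exact (Module.End.hasEigenvalue_of_hasEigenvector
    ⟨Module.End.mem_eigenspace_iff.mpr h, hw⟩).mem_spectrum

theorem periSpec_mul_comm_s7 (a b : E →L[ℂ] E) :
    periSpec (a * b) = periSpec (b * a) := by
  rcases subsingleton_or_nontrivial E with hE | hE
  · congr 1; ext; exact Subsingleton.elim _ _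
  have key : ∀ a b : E →L[ℂ] E, periSpec (a * b) ⊆ periSpec (b * a) := by
    rintro a b z ⟨hz, hzr⟩
    rw [spectralRadius_mul_comm] at hzr
    refine ⟨?_, hzr⟩
    rcases eq_or_ne z 0 with rfl | hz0
    · -- a peripheral `0` means the spectral radius is `0`, so the nonempty `σ (b * a)` is `{0}`
      obtain ⟨k, hk, hkr⟩ :=
        spectrum.exists_nnnorm_eq_spectralRadius_of_nonempty (spectrum.nonempty (b * a))
      rw [← hzr] at hkr
      simpa [(by simpa using hkr : k = 0)] using hk
    · have : z ∈ spectrum ℂ (a * b) \ {0} := ⟨hz, hz0⟩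
      exact (spectrum.nonzero_mul_comm (𝕜 := ℂ) a b ▸ this).1
  exact (key a b).antisymm (key b a)

theorem periSpec_pow_mul_mul_pow (B A : E →L[ℂ] E) (r s : ℕ) :
    periSpec (B ^ r * A * B ^ s) = periSpec (B ^ (r + s) * A) := by
  rw [periSpec_mul_comm_s7, ← mul_assoc, ← pow_add, add_comm]

theorem periSpec_eq_singleton_of_apply_eq_smul {N : E →L[ℂ] E} {φ : E → ℂ}
    {w : E} (hw : w ≠ 0) (hN : ∀ x, N x = φ x • w) : periSpec N = {φ w} := by
  have hNN : N * N = φ w • N := by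
    ext x
    rw [mul_apply_eq_comp, smul_apply, hN x, map_smul, hN w, smul_comm]
  refine periSpec_eq_singleton (mem_spectrum_of_apply_eq_smul hw (hN w)) fun z hz => ?_
  have := spectrum.isRoot_of_aeval_eq_zero (p := Polynomial.X * (Polynomial.X - Polynomial.C (φ w)))
    (by simp [mul_sub, hNN, ← Algebra.smul_def]) hz
  simpa [sub_eq_zero] using this

theorem periSpec_pow_mul_mul_pow_of_pow_apply {B : E →L[ℂ] E} {r s : ℕ} {φ : E → ℂ} {w : E}
    (hw : w ≠ 0) (hB : ∀ x, (B ^ (r + s)) x = φ x • w) (A : E →L[ℂ] E) :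
    periSpec (B ^ r * A * B ^ s) = {φ (A w)} := by
  rw [periSpec_pow_mul_mul_pow]
  exact periSpec_eq_singleton_of_apply_eq_smul (φ := fun x => φ (A x)) hw fun x => hB (A x)

theorem periSpec_smulRight_pow_mul_mul_pow {g : StrongDual ℂ E} {y : E} (hgy : g y = 1)
    {r s : ℕ} (hrs : r + s ≠ 0) (A : E →L[ℂ] E) :
    periSpec ((g.smulRight y) ^ r * A * (g.smulRight y) ^ s) = {g (A y)} := by
  have hidem : IsIdempotentElem (g.smulRight y) := by
    ext x
    simp [hgy]
  refine periSpec_pow_mul_mul_pow_of_pow_apply (φ := g) (fun h0 => by simp [h0] at hgy)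
    (fun x => ?_) A
  rw [hidem.pow_eq hrs, ContinuousLinearMap.smulRight_apply]

theorem one_mem_periSpec_and_neg_one_mem {N : E →L[ℂ] E} {v w : E} {a b : StrongDual ℂ E}
    (hav : a v = 1) (haw : a w = 0) (hbv : b v = 0) (hbw : b w = 1)
    (hN : ∀ z, N z = a z • v - b z • w) : 1 ∈ periSpec N ∧ -1 ∈ periSpec N := by
  have hv : v ≠ 0 := by rintro rfl; simp at hav
  have hw : w ≠ 0 := by rintro rfl; simp at hbw
  have hN3 : N ^ 3 = N := by
    ext z
    simp [pow_succ, mul_apply_eq_comp, hN, hav, haw, hbv, hbw]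
  have hσ : ∀ k ∈ spectrum ℂ N, ‖k‖₊ ≤ 1 := fun k hk => by
    have hk3 : k ^ 3 - k = 0 := by
      have := spectrum.isRoot_of_aeval_eq_zero
        (p := Polynomial.X ^ 3 - Polynomial.X) (by simp [hN3]) hk
      simpa using this
    have : k * (k - 1) * (k + 1) = 0 := by linear_combination hk3
    rcases mul_eq_zero.mp this with h | h
    · rcases mul_eq_zero.mp h with h | h
      · simp [h]
      · simp [sub_eq_zero.mp h]
    · simp [eq_neg_of_add_eq_zero_left h]
  have hNv : N v = (1 : ℂ) • v := by simp [hN, hav, hbv]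
  have hNw : N w = (-1 : ℂ) • w := by simp [hN, haw, hbw]
  exact ⟨mem_periSpec_of_forall_nnnorm_le (mem_spectrum_of_apply_eq_smul hv hNv)
    (by simpa using hσ), mem_periSpec_of_forall_nnnorm_le (mem_spectrum_of_apply_eq_smul hw hNw)
    (by simpa using hσ)⟩

theorem pow_apply_mem_span_of_periSpec_subsingleton {B : E →L[ℂ] E} {r s : ℕ}
    (hsing : ∀ A : E →L[ℂ] E, LinearMap.rank (A : E →ₗ[ℂ] E) < ℵ₀ →
      (periSpec (B ^ r * A * B ^ s)).Subsingleton)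
    {u : E} (hu : (B ^ (r + s)) u ≠ 0) (x : E) : (B ^ (r + s)) x ∈ ℂ ∙ (B ^ (r + s)) u := by
  set T := B ^ (r + s)
  by_contra hx
  have hli : LinearIndependent ℂ ![T x, T u] := by
    rw [linearIndependent_fin2]
    exact ⟨hu, fun a ha => hx (Submodule.mem_span_singleton.mpr ⟨a, ha⟩)⟩
  obtain ⟨f, hf⟩ := SeparatingDual.exists_biorthogonal hli
  set A₀ : E →L[ℂ] E := (f 0).smulRight x + (f 1).smulRight (-u)
  have hrank : LinearMap.rank (A₀ : E →ₗ[ℂ] E) < ℵ₀ := by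
    refine (LinearMap.rank_add_le _ _).trans_lt (Cardinal.add_lt_aleph0 ?_ ?_) <;>
      exact (ContinuousLinearMap.rank_smulRight_le_one _ _).trans_lt Cardinal.one_lt_aleph0
  obtain ⟨hone, hneg⟩ := one_mem_periSpec_and_neg_one_mem (N := T * A₀)
    (by simpa using hf 0 0) (by simpa using hf 0 1) (by simpa using hf 1 0)
    (by simpa using hf 1 1) fun z => by simp [A₀, sub_eq_add_neg]
  rw [← periSpec_pow_mul_mul_pow] at hone hneg
  exact (by norm_num : (1 : ℂ) ≠ -1) (hsing A₀ hrank hone hneg)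

theorem exists_pow_apply_eq_smul_of_periSpec_subsingleton {B : E →L[ℂ] E} {r s : ℕ}
    (hsing : ∀ A : E →L[ℂ] E, LinearMap.rank (A : E →ₗ[ℂ] E) < ℵ₀ →
      (periSpec (B ^ r * A * B ^ s)).Subsingleton)
    (hB : B ^ (r + s) ≠ 0) : ∃ w ≠ 0, ∃ φ : E →ₗ[ℂ] ℂ, ∀ x, (B ^ (r + s)) x = φ x • w := by
  obtain ⟨u, hu⟩ : ∃ u, (B ^ (r + s)) u ≠ 0 := by
    by_contra! h
    exact hB (ContinuousLinearMap.ext h)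
  exact ⟨_, hu, LinearMap.exists_eq_smul_of_forall_mem_span_singleton _ hu
    (pow_apply_mem_span_of_periSpec_subsingleton hsing hu)⟩

theorem exists_linearMap_of_periSpec_sandwich_eq_singleton
    {𝒜 : NonUnitalSubalgebra ℂ (E →L[ℂ] E)}
    (h𝒜 : ∀ T : E →L[ℂ] E, LinearMap.rank (T : E →ₗ[ℂ] E) < ℵ₀ → T ∈ 𝒜)
    {r s : ℕ} {B : 𝒜} {c : 𝒜 → ℂ}
    (hc : ∀ A : 𝒜,
      periSpec ((B : E →L[ℂ] E) ^ r * (A : E →L[ℂ] E) * (B : E →L[ℂ] E) ^ s) = {c A})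
    (hcB : c B ≠ 0) : ∃ ℓ : 𝒜 →ₗ[ℂ] ℂ, ∀ A, c A = ℓ A := by
  have hsing : ∀ A : E →L[ℂ] E, LinearMap.rank (A : E →ₗ[ℂ] E) < ℵ₀ →
      (periSpec ((B : E →L[ℂ] E) ^ r * A * (B : E →L[ℂ] E) ^ s)).Subsingleton :=
    fun A hA => hc ⟨A, h𝒜 A hA⟩ ▸ Set.subsingleton_singleton
  have hB : (B : E →L[ℂ] E) ^ (r + s) ≠ 0 := by
    intro h0
    have hcB0 := hc B
    rw [periSpec_pow_mul_mul_pow, h0, zero_mul] at hcB0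
    exact hcB (periSpec_subset_zero (by rw [hcB0]; rfl))
  obtain ⟨w, hw, φ, hφ⟩ := exists_pow_apply_eq_smul_of_periSpec_subsingleton hsing hB
  refine ⟨φ ∘ₗ (ContinuousLinearMap.apply ℂ E w).toLinearMap ∘ₗ 𝒜.toSubmodule.subtype,
    fun A => ?_⟩
  have hcA := hc A
  rw [periSpec_pow_mul_mul_pow_of_pow_apply hw hφ] at hcA
  exact (Set.singleton_eq_singleton_iff.mp hcA).symm

theorem eq_of_periSpec_sandwich_eq {r s : ℕ} (hrs : r + s ≠ 0) {A A' : E →L[ℂ] E}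
    (h : ∀ B : E →L[ℂ] E, LinearMap.rank (B : E →ₗ[ℂ] E) < ℵ₀ →
      periSpec (B ^ r * A * B ^ s) = periSpec (B ^ r * A' * B ^ s)) : A = A' := by
  refine ContinuousLinearMap.ext_of_forall_dual fun y g hgy => ?_
  have := h (g.smulRight y)
    ((ContinuousLinearMap.rank_smulRight_le_one g y).trans_lt Cardinal.one_lt_aleph0)
  rwa [periSpec_smulRight_pow_mul_mul_pow hgy hrs, periSpec_smulRight_pow_mul_mul_pow hgy hrs,
    Set.singleton_eq_singleton_iff] at this

end Operator

theorem periSpec_sandwich_preserver_linear_general {X₁ X₂ : Type*}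
    [NormedAddCommGroup X₁] [NormedSpace ℂ X₁] [CompleteSpace X₁]
    [NormedAddCommGroup X₂] [NormedSpace ℂ X₂] [CompleteSpace X₂]
    (A₁ : NonUnitalSubalgebra ℂ (X₁ →L[ℂ] X₁))
    (A₂ : NonUnitalSubalgebra ℂ (X₂ →L[ℂ] X₂))
    (hA₁ : ∀ T : X₁ →L[ℂ] X₁, LinearMap.rank (T : X₁ →ₗ[ℂ] X₁) < Cardinal.aleph0 → T ∈ A₁)
    (r s : ℕ) (hrs : 1 ≤ r + s)
    (Φ : A₁ → A₂)
    (hrange : ∀ T : X₂ →L[ℂ] X₂, LinearMap.rank (T : X₂ →ₗ[ℂ] X₂) ≤ 2 →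
      ∃ A : A₁, (Φ A : X₂ →L[ℂ] X₂) = T)
    (hpres : ∀ A B : A₁,
      periSpec ((B : X₁ →L[ℂ] X₁) ^ r * (A : X₁ →L[ℂ] X₁) * (B : X₁ →L[ℂ] X₁) ^ s)
        = periSpec ((Φ B : X₂ →L[ℂ] X₂) ^ r * (Φ A : X₂ →L[ℂ] X₂)
            * (Φ B : X₂ →L[ℂ] X₂) ^ s)) :
    (∀ A B : A₁, Φ (A + B) = Φ A + Φ B) ∧
    (∀ (α : ℂ) (A : A₁), Φ (α • A) = α • Φ A) ∧
    Function.Injective Φ := by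
  have hrs' : r + s ≠ 0 := by omega
  have hdual : ∀ (y : X₂) (g : StrongDual ℂ X₂), g y = 1 →
      ∃ ℓ : A₁ →ₗ[ℂ] ℂ, ∀ A, g ((Φ A : X₂ →L[ℂ] X₂) y) = ℓ A := by
    intro y g hgy
    obtain ⟨B, hB⟩ := hrange _ ((g.rank_smulRight_le_one y).trans one_le_two)
    refine exists_linearMap_of_periSpec_sandwich_eq_singleton hA₁ (r := r) (s := s) (B := B)
      (fun A => ?_) ?_
    · rw [hpres, hB, periSpec_smulRight_pow_mul_mul_pow hgy hrs']
    · simp [hB, hgy]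
  have hlin : IsLinearMap ℂ fun A : A₁ => (Φ A : X₂ →L[ℂ] X₂) := isLinearMap_of_forall_dual hdual
  refine ⟨fun A B => Subtype.ext (hlin.map_add A B), fun α A => Subtype.ext (hlin.map_smul α A),
    fun A A' hAA' => Subtype.ext (eq_of_periSpec_sandwich_eq hrs' fun B hB => ?_)⟩
  rw [hpres A ⟨B, hA₁ B hB⟩, hpres A' ⟨B, hA₁ B hB⟩, hAA']

/-- Claim 3 in the proof of Theorem 2.2: if `Φ` is a map between standard operator algebras
on complex Banach spaces of dimension at least two whose range contains all operators of
rank at most two and which preserves the peripheral spectrum of the products `B^r A B^s`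
(`r + s ≥ 1`), then `Φ` is additive and homogeneous, hence linear, and consequently
injective. -/
theorem periSpec_sandwich_preserver_linear {X₁ X₂ : Type*}
    [NormedAddCommGroup X₁] [NormedSpace ℂ X₁] [CompleteSpace X₁]
    [NormedAddCommGroup X₂] [NormedSpace ℂ X₂] [CompleteSpace X₂]
    (hdim₁ : 2 ≤ Module.rank ℂ X₁) (hdim₂ : 2 ≤ Module.rank ℂ X₂)
    (A₁ : NonUnitalSubalgebra ℂ (X₁ →L[ℂ] X₁))
    (A₂ : NonUnitalSubalgebra ℂ (X₂ →L[ℂ] X₂))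
    (hA₁ : ∀ T : X₁ →L[ℂ] X₁, LinearMap.rank (T : X₁ →ₗ[ℂ] X₁) < Cardinal.aleph0 → T ∈ A₁)
    (hA₂ : ∀ T : X₂ →L[ℂ] X₂, LinearMap.rank (T : X₂ →ₗ[ℂ] X₂) < Cardinal.aleph0 → T ∈ A₂)
    (r s : ℕ) (hrs : 1 ≤ r + s)
    (Φ : A₁ → A₂)
    (hrange : ∀ T : X₂ →L[ℂ] X₂, LinearMap.rank (T : X₂ →ₗ[ℂ] X₂) ≤ 2 →
      ∃ A : A₁, (Φ A : X₂ →L[ℂ] X₂) = T)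
    (hpres : ∀ A B : A₁,
      periSpec ((B : X₁ →L[ℂ] X₁) ^ r * (A : X₁ →L[ℂ] X₁) * (B : X₁ →L[ℂ] X₁) ^ s)
        = periSpec ((Φ B : X₂ →L[ℂ] X₂) ^ r * (Φ A : X₂ →L[ℂ] X₂)
            * (Φ B : X₂ →L[ℂ] X₂) ^ s)) :
    (∀ A B : A₁, Φ (A + B) = Φ A + Φ B) ∧
    (∀ (α : ℂ) (A : A₁), Φ (α • A) = α • Φ A) ∧
    Function.Injective Φ :=
  periSpec_sandwich_preserver_linear_general A₁ A₂ hA₁ r s hrs Φ hrange hpres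
end

section
/- Let X₁ and X₂ be complex Banach spaces with X₁ nonzero, let m ≥ 2 be an integer, and let T : X₁ → X₂ and S : X₁* → X₂* be bijective linear maps such that ⟨Tx, Sf⟩^m = ⟨x, f⟩^m for all x ∈ X₁ and f ∈ X₁*. Then there exists a single scalar λ ∈ ℂ with λ^m = 1 such that ⟨Tx, Sf⟩ = λ⟨x, f⟩ for all x ∈ X₁ and f ∈ X₁*. -/
/-!
If `φ, ψ` are linear functionals with `φ^m = ψ^m` and `ψ v₀ ≠ 0`, then along the line `v₀ + t v`
the ratio `φ / ψ` is an `m`-th root of unity. Infinitely many `t` but finitely many roots of unity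
give two parameters with the same ratio, and for a ratio of affine functions of `t` this forces
`φ = (φ v₀ / ψ v₀) ψ`. Applying this in each variable of the bilinear forms `⟨Tx, Sf⟩` and
`⟨x, f⟩` and comparing at one point with `⟨x₀, f₀⟩ ≠ 0` yields a single constant.
-/

section Field

variable {K : Type*} [Field K] [Infinite K]

theorem mul_eq_mul_of_forall_add_mul_pow_eq {m : ℕ} (hm : m ≠ 0)
    {a b c d : K} (hc : c ≠ 0) (H : ∀ t : K, (a + t * b) ^ m = (c + t * d) ^ m) :
    a * d = b * c := by
  have hpoles : {t : K | c + t * d = 0}.Subsingleton := by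
    intro t₁ ht₁ t₂ ht₂
    have hd : d ≠ 0 := by rintro rfl; simp_all
    exact mul_right_cancel₀ hd (add_left_cancel (ht₁.trans ht₂.symm))
  have hmaps : Set.MapsTo (fun t => (a + t * b) / (c + t * d)) {t | c + t * d = 0}ᶜ
      (Polynomial.nthRootsFinset m (1 : K) : Set K) := by
    intro t ht
    rw [Finset.mem_coe, Polynomial.mem_nthRootsFinset (Nat.pos_of_ne_zero hm), div_pow, H t]
    exact div_self (pow_ne_zero m ht)
  obtain ⟨t₁, ht₁, t₂, ht₂, hne, heq⟩ :=
    hpoles.finite.infinite_compl.exists_ne_map_eq_of_mapsTo hmaps (Finset.finite_toSet _)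
  rw [div_eq_div_iff ht₁ ht₂] at heq
  have : (t₂ - t₁) * (a * d - b * c) = 0 := by linear_combination heq
  exact sub_eq_zero.mp ((mul_eq_zero.mp this).resolve_left (sub_ne_zero.mpr hne.symm))

variable {V W : Type*} [AddCommGroup V] [Module K V] [AddCommGroup W] [Module K W]

theorem LinearMap.eq_smul_of_forall_pow_eq_pow {m : ℕ} (hm : m ≠ 0)
    {φ ψ : V →ₗ[K] K} (h : ∀ v, φ v ^ m = ψ v ^ m) {v₀ : V} (hv₀ : ψ v₀ ≠ 0) :
    φ = (φ v₀ / ψ v₀) • ψ := by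
  ext v
  have := mul_eq_mul_of_forall_add_mul_pow_eq hm hv₀ (b := φ v) (d := ψ v) fun t => by
    simpa using h (v₀ + t • v)
  simp only [LinearMap.smul_apply, smul_eq_mul]
  field_simp
  linear_combination -this

theorem LinearMap.exists_pow_eq_one_apply_eq_mul_of_forall_pow_eq_pow {m : ℕ}
    (hm : m ≠ 0) (B A : V →ₗ[K] W →ₗ[K] K) (h : ∀ v w, B v w ^ m = A v w ^ m) :
    ∃ lam : K, lam ^ m = 1 ∧ ∀ v w, B v w = lam * A v w := by
  by_cases hA : ∀ v w, A v w = 0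
  · refine ⟨1, one_pow m, fun v w => ?_⟩
    simpa [hA, hm] using h v w
  obtain ⟨v₀, w₀, h₀⟩ : ∃ v w, A v w ≠ 0 := by simpa using hA
  set lam := B v₀ w₀ / A v₀ w₀
  have hrow : B v₀ = lam • A v₀ := eq_smul_of_forall_pow_eq_pow hm (h v₀) h₀
  have hcol : ∀ w, A v₀ w ≠ 0 → B.flip w = lam • A.flip w := by
    intro w hw
    rw [eq_smul_of_forall_pow_eq_pow hm (φ := B.flip w) (ψ := A.flip w) (fun v => h v w) hw]
    simp [hrow, hw]
  refine ⟨lam, by rw [div_pow, h, div_self (pow_ne_zero m h₀)], fun v w => ?_⟩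
  by_cases hw : A v₀ w = 0
  · -- `A v₀ (w + w₀) ≠ 0`, and `w = (w + w₀) - w₀`
    have hsum := LinearMap.congr_fun (hcol (w + w₀) (by simpa [hw] using h₀)) v
    have hw₀ := LinearMap.congr_fun (hcol w₀ h₀) v
    simp only [map_add, LinearMap.add_apply, LinearMap.flip_apply, LinearMap.smul_apply,
      smul_eq_mul] at hsum hw₀
    linear_combination hsum - hw₀
  · simpa using LinearMap.congr_fun (hcol w hw) v

end Field

theorem dual_pair_mth_root_general {X₁ X₂ : Type*}
    [NormedAddCommGroup X₁] [NormedSpace ℂ X₁]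
    [NormedAddCommGroup X₂] [NormedSpace ℂ X₂]
    (m : ℕ) (hm : 2 ≤ m)
    (T : X₁ →ₗ[ℂ] X₂)
    (S : StrongDual ℂ X₁ →ₗ[ℂ] StrongDual ℂ X₂)
    (h : ∀ (x : X₁) (f : StrongDual ℂ X₁), (S f) (T x) ^ m = (f x) ^ m) :
    ∃ lam : ℂ, lam ^ m = 1 ∧
      ∀ (x : X₁) (f : StrongDual ℂ X₁), (S f) (T x) = lam * f x := by
  obtain ⟨lam, hlam, hB⟩ := LinearMap.exists_pow_eq_one_apply_eq_mul_of_forall_pow_eq_pow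
    (by omega) ((ContinuousLinearMap.coeLM ℂ ∘ₗ S).compl₂ T) (ContinuousLinearMap.coeLM ℂ)
    (fun f x => h x f)
  exact ⟨lam, hlam, fun x f => hB f x⟩

/-- Claim 5 / Assertion 3 in the proof of Theorem 2.2: if `X₁` is a nonzero complex Banach
space, `m ≥ 2`, and `T : X₁ → X₂`, `S : X₁* → X₂*` are bijective linear maps with
`⟨Tx, Sf⟩^m = ⟨x, f⟩^m` for all `x ∈ X₁`, `f ∈ X₁*`, then there is a single `λ ∈ ℂ` with
`λ^m = 1` such that `⟨Tx, Sf⟩ = λ ⟨x, f⟩` for all `x` and `f`. -/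
theorem dual_pair_mth_root {X₁ X₂ : Type*}
    [NormedAddCommGroup X₁] [NormedSpace ℂ X₁] [CompleteSpace X₁] [Nontrivial X₁]
    [NormedAddCommGroup X₂] [NormedSpace ℂ X₂] [CompleteSpace X₂]
    (m : ℕ) (hm : 2 ≤ m)
    (T : X₁ →ₗ[ℂ] X₂) (hT : Function.Bijective T)
    (S : StrongDual ℂ X₁ →ₗ[ℂ] StrongDual ℂ X₂) (hS : Function.Bijective S)
    (h : ∀ (x : X₁) (f : StrongDual ℂ X₁), (S f) (T x) ^ m = (f x) ^ m) :
    ∃ lam : ℂ, lam ^ m = 1 ∧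
      ∀ (x : X₁) (f : StrongDual ℂ X₁), (S f) (T x) = lam * f x :=
  dual_pair_mth_root_general m hm T S h
end

section
/- Let X₁ and X₂ be complex Banach spaces, let λ ∈ ℂ be a nonzero scalar, and let T : X₁ → X₂ and S : X₁* → X₂* be bijective linear maps (not assumed continuous) such that ⟨Tx, Sf⟩ = λ⟨x, f⟩ for all x ∈ X₁ and f ∈ X₁*. Then T is a bounded invertible operator and S = λ(T*)⁻¹, where T* : X₂* → X₁* is the adjoint of T; in particular S is also bounded. -/
/-!
Since `S` is onto `X₂*`, every functional on `X₂` is some `S f`, and `S f ∘ T = λ f` is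
continuous. Functionals separate points of `X₂`, so `T` has closed graph and is bounded by the
closed graph theorem. Evaluating the pairing identity at `x = T⁻¹ y` gives `S f = λ f ∘ T⁻¹`,
which is bounded in `f`.
-/

theorem LinearMap.continuous_of_forall_dual_comp_continuous
    {𝕜 E F : Type*} [NontriviallyNormedField 𝕜]
    [NormedAddCommGroup E] [NormedSpace 𝕜 E] [CompleteSpace E]
    [NormedAddCommGroup F] [NormedSpace 𝕜 F] [CompleteSpace F] [SeparatingDual 𝕜 F]
    (T : E →ₗ[𝕜] F) (hT : ∀ g : StrongDual 𝕜 F, Continuous (g ∘ T)) : Continuous T := by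
  refine T.continuous_of_seq_closed_graph fun u x y hu hTu => ?_
  refine (SeparatingDual.eq_iff_forall_dual_eq (R := 𝕜)).2 fun g => ?_
  exact tendsto_nhds_unique ((g.continuous.tendsto y).comp hTu) (((hT g).tendsto x).comp hu)

theorem dual_pair_bounded_general {X₁ X₂ : Type*}
    [NormedAddCommGroup X₁] [NormedSpace ℂ X₁] [CompleteSpace X₁]
    [NormedAddCommGroup X₂] [NormedSpace ℂ X₂] [CompleteSpace X₂]
    (lam : ℂ)
    (T : X₁ →ₗ[ℂ] X₂) (hT : Function.Bijective T)
    (S : StrongDual ℂ X₁ →ₗ[ℂ] StrongDual ℂ X₂) (hS : Function.Bijective S)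
    (h : ∀ (x : X₁) (f : StrongDual ℂ X₁), (S f) (T x) = lam * f x) :
    ∃ T' : X₁ ≃L[ℂ] X₂, (∀ x : X₁, T' x = T x) ∧
      (∀ f : StrongDual ℂ X₁,
        S f = lam • ((f : X₁ →L[ℂ] ℂ).comp (T'.symm : X₂ →L[ℂ] X₁))) ∧
      Continuous S := by
  have hTc : Continuous T := T.continuous_of_forall_dual_comp_continuous fun g => by
    obtain ⟨f, rfl⟩ := hS.2 g
    simp only [Function.comp_def, h]
    fun_prop
  let T' : X₁ ≃L[ℂ] X₂ := .ofBijective ⟨T, hTc⟩ (LinearMap.ker_eq_bot_of_injective hT.1)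
    (LinearMap.range_eq_top.mpr hT.2)
  have hS_eq (f : StrongDual ℂ X₁) :
      S f = lam • (f : X₁ →L[ℂ] ℂ).comp (T'.symm : X₂ →L[ℂ] X₁) := by
    ext y
    simpa [show T (T'.symm y) = y from T'.apply_symm_apply y] using h (T'.symm y) f
  refine ⟨T', fun _ => rfl, hS_eq, ?_⟩
  rw [show ⇑S = _ from funext hS_eq]
  fun_prop

/-- Part of Claim 6 in the proof of Theorem 2.2: if `λ ∈ ℂ` is nonzero and
`T : X₁ → X₂`, `S : X₁* → X₂*` are (not necessarily continuous) bijective linear maps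
between complex Banach spaces and their duals with `⟨Tx, Sf⟩ = λ ⟨x, f⟩` for all `x ∈ X₁`
and `f ∈ X₁*`, then `T` is a bounded invertible operator and `S = λ (T*)⁻¹`, i.e.
`S f = λ (f ∘ T⁻¹)` for all `f`; in particular `S` is bounded. -/
theorem dual_pair_bounded {X₁ X₂ : Type*}
    [NormedAddCommGroup X₁] [NormedSpace ℂ X₁] [CompleteSpace X₁]
    [NormedAddCommGroup X₂] [NormedSpace ℂ X₂] [CompleteSpace X₂]
    (lam : ℂ) (hlam : lam ≠ 0)
    (T : X₁ →ₗ[ℂ] X₂) (hT : Function.Bijective T)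
    (S : StrongDual ℂ X₁ →ₗ[ℂ] StrongDual ℂ X₂) (hS : Function.Bijective S)
    (h : ∀ (x : X₁) (f : StrongDual ℂ X₁), (S f) (T x) = lam * f x) :
    ∃ T' : X₁ ≃L[ℂ] X₂, (∀ x : X₁, T' x = T x) ∧
      (∀ f : StrongDual ℂ X₁,
        S f = lam • ((f : X₁ →L[ℂ] ℂ).comp (T'.symm : X₂ →L[ℂ] X₁))) ∧
      Continuous S :=
  dual_pair_bounded_general lam T hT S hS h
end

section
/- Let H be a complex Hilbert space, let A and B be nonzero bounded linear operators on H, and let n ≥ 2 be an integer. Then ⟨Ax, x⟩ = ⟨Bx, x⟩^n holds for every unit vector x ∈ H if and only if there exists a complex number c such that A = c^n I and B = cI. -/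
/-!
For orthogonal `x, y` and `|w| = 1` the vector `x + w y` has constant length, and the
hypothesis at it becomes an identity of Laurent polynomials in `w` on the unit circle:
a linear one on the `A` side, the `n`-th power of a linear one on the `B` side. Since
`n ≥ 2`, comparing the coefficients of `w⁻ⁿ` forces `⟨B y, x⟩ = 0`. So `B` maps every vector
into its own span, hence is a scalar `c`, and then `⟨A x, x⟩ = ⟨cⁿ x, x⟩` for all `x`
gives `A = cⁿ` by polarization.
-/

open Polynomial

lemma Polynomial.eq_zero_of_forall_norm_eq_one_eval_eq_zero {P : ℂ[X]}
    (h : ∀ w : ℂ, ‖w‖ = 1 → P.eval w = 0) : P = 0 := by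
  have hcircle : (Metric.sphere (0 : ℂ) 1).Infinite :=
    (isPreconnected_sphere (by simp [Complex.rank_real_complex]) 0 1).infinite_of_nontrivial
      ⟨1, by simp, -1, by simp, by norm_num⟩
  exact P.eq_zero_of_infinite_isRoot <| hcircle.mono fun w hw ↦
    h w (mem_sphere_zero_iff_norm.1 hw)

lemma eq_zero_of_forall_norm_eq_one_mul_pow_eq {n : ℕ} (hn : 2 ≤ n) {c s a b t a' b' : ℂ}
    (hc : c ≠ 0)
    (h : ∀ w : ℂ, ‖w‖ = 1 → c * (s + a * w + b * w⁻¹) ^ n = t + a' * w + b' * w⁻¹) :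
    b = 0 := by
  obtain ⟨m, rfl⟩ : ∃ m, n = m + 2 := ⟨n - 2, by omega⟩
  set P : ℂ[X] := C c * (C b + C s * X + C a * X ^ 2) ^ (m + 2)
    - X ^ (m + 1) * (C b' + C t * X + C a' * X ^ 2)
  have hP : P = 0 := by
    refine eq_zero_of_forall_norm_eq_one_eval_eq_zero fun w hw ↦ ?_
    have hw0 : w ≠ 0 := norm_ne_zero_iff.1 (by rw [hw]; exact one_ne_zero)
    have hb : b + s * w + a * w ^ 2 = w * (s + a * w + b * w⁻¹) := by field_simp; ring
    simp only [P, eval_sub, eval_mul, eval_pow, eval_add, eval_C, eval_X, hb, mul_pow]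
    linear_combination w ^ (m + 2) * h w hw + (w ^ (m + 1) * b') * (mul_inv_cancel₀ hw0)
  have h0 := congrArg (eval 0) hP
  simp only [P, eval_sub, eval_mul, eval_pow, eval_add, eval_C, eval_X] at h0
  simpa [hc] using h0

section InnerProduct

variable {E : Type*} [NormedAddCommGroup E] [InnerProductSpace ℂ E]

local notation "⟪" x ", " y "⟫" => inner ℂ x y

lemma inner_map_self_mul_inner_self_pow {A B : E →ₗ[ℂ] E} {n : ℕ}
    (h : ∀ x : E, ‖x‖ = 1 → ⟪A x, x⟫ = ⟪B x, x⟫ ^ n) (x : E) :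
    ⟪A x, x⟫ * ⟪x, x⟫ ^ n = ⟪B x, x⟫ ^ n * ⟪x, x⟫ := by
  rcases eq_or_ne x 0 with rfl | hx
  · simp
  set r : ℂ := Complex.ofReal ‖x‖
  set u : E := r⁻¹ • x
  have hxu : x = r • u := by simp [u, r, smul_smul, hx]
  have hr : (starRingEnd ℂ) r = r := Complex.conj_ofReal _
  have hu1 : ‖u‖ = 1 := norm_smul_inv_norm hx
  have huu : ⟪u, u⟫ = 1 := by simp [inner_self_eq_norm_sq_to_K, hu1]
  have hu := h u hu1
  simp only [hxu, map_smul, inner_smul_left, inner_smul_right, hr, huu, hu]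
  ring

lemma inner_map_self_add_smul {w : ℂ} (hw : ‖w‖ = 1) (T : E →ₗ[ℂ] E) (x y : E) :
    ⟪T (x + w • y), x + w • y⟫ = ⟪T x, x⟫ + ⟪T y, y⟫ + w * ⟪T x, y⟫ + w⁻¹ * ⟪T y, x⟫ := by
  have hw0 : w ≠ 0 := norm_ne_zero_iff.1 (by rw [hw]; exact one_ne_zero)
  simp only [map_add, map_smul, inner_add_left, inner_add_right, inner_smul_left,
    inner_smul_right, ← Complex.inv_eq_conj hw]
  field_simp
  ring

lemma inner_map_eq_zero_of_inner_eq_zero {A B : E →ₗ[ℂ] E} {n : ℕ} (hn : 2 ≤ n)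
    (h : ∀ x : E, ⟪A x, x⟫ * ⟪x, x⟫ ^ n = ⟪B x, x⟫ ^ n * ⟪x, x⟫) {x y : E} (hxy : ⟪x, y⟫ = 0) :
    ⟪B y, x⟫ = 0 := by
  rcases eq_or_ne y 0 with rfl | hy
  · simp
  have hyx : ⟪y, x⟫ = 0 := inner_eq_zero_symm.1 hxy
  have hk : ⟪x, x⟫ + ⟪y, y⟫ ≠ 0 := fun h0 ↦ by
    have hre := congrArg RCLike.re h0
    rw [map_add, inner_self_eq_norm_sq, inner_self_eq_norm_sq, map_zero] at hre
    nlinarith [norm_pos_iff.2 hy]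
  refine eq_zero_of_forall_norm_eq_one_mul_pow_eq hn hk (s := ⟪B x, x⟫ + ⟪B y, y⟫)
    (a := ⟪B x, y⟫) (t := (⟪x, x⟫ + ⟪y, y⟫) ^ n * (⟪A x, x⟫ + ⟪A y, y⟫))
    (a' := (⟪x, x⟫ + ⟪y, y⟫) ^ n * ⟪A x, y⟫) (b' := (⟪x, x⟫ + ⟪y, y⟫) ^ n * ⟪A y, x⟫)
    fun w hw ↦ ?_
  have hzz := inner_map_self_add_smul hw LinearMap.id x y
  simp only [LinearMap.id_apply, hxy, hyx, mul_zero, add_zero] at hzz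
  have hz := h (x + w • y)
  rw [inner_map_self_add_smul hw A, inner_map_self_add_smul hw B, hzz] at hz
  linear_combination -hz

lemma exists_eq_smul_one_of_forall_inner_eq_zero {B : E →ₗ[ℂ] E}
    (h : ∀ x y : E, ⟪x, y⟫ = 0 → ⟪B y, x⟫ = 0) : ∃ c : ℂ, B = c • 1 := by
  refine LinearMap.exists_eq_smul_id_of_forall_notLinearIndependent fun v ↦ ?_
  have hv : B v ∈ (ℂ ∙ v)ᗮᗮ := (Submodule.mem_orthogonal _ _).2 fun u hu ↦
    inner_eq_zero_symm.1 (h u v (Submodule.mem_orthogonal_singleton_iff_inner_left.1 hu))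
  rw [Submodule.orthogonal_orthogonal] at hv
  obtain ⟨c, hc⟩ := Submodule.mem_span_singleton.1 hv
  intro hli
  have := LinearIndependent.pair_iff.1 hli c (-1) (by rw [← hc]; module)
  exact neg_ne_zero.2 one_ne_zero this.2

lemma exists_eq_smul_one_of_inner_map_self_eq_pow {A B : E →ₗ[ℂ] E} {n : ℕ} (hn : 2 ≤ n)
    (h : ∀ x : E, ‖x‖ = 1 → ⟪A x, x⟫ = ⟪B x, x⟫ ^ n) :
    ∃ c : ℂ, A = c ^ n • 1 ∧ B = c • 1 := by
  have hom := inner_map_self_mul_inner_self_pow h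
  obtain ⟨c, rfl⟩ := exists_eq_smul_one_of_forall_inner_eq_zero
    fun x y hxy ↦ inner_map_eq_zero_of_inner_eq_zero hn hom hxy
  refine ⟨c, (ext_inner_map _ _).1 fun x ↦ ?_, rfl⟩
  rcases eq_or_ne x 0 with rfl | hx
  · simp
  have hxx : ⟪x, x⟫ ^ n ≠ 0 := pow_ne_zero _ (inner_self_ne_zero.2 hx)
  refine mul_right_cancel₀ hxx ?_
  have hxA := hom x
  simp only [LinearMap.smul_apply, Module.End.one_apply, inner_smul_left, map_pow] at hxA ⊢
  linear_combination hxA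

end InnerProduct

theorem quadraticForm_power_iff_scalar_general {H : Type*} [NormedAddCommGroup H]
    [InnerProductSpace ℂ H]
    (A B : H →L[ℂ] H) (n : ℕ) (hn : 2 ≤ n) :
    (∀ x : H, ‖x‖ = 1 → (inner ℂ (A x) x : ℂ) = (inner ℂ (B x) x : ℂ) ^ n) ↔
      ∃ c : ℂ, A = c ^ n • (1 : H →L[ℂ] H) ∧ B = c • (1 : H →L[ℂ] H) := by
  constructor
  · intro h
    obtain ⟨c, hA, hB⟩ := exists_eq_smul_one_of_inner_map_self_eq_pow (A := A.toLinearMap) hn h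
    exact ⟨c, ContinuousLinearMap.coe_inj.1 hA, ContinuousLinearMap.coe_inj.1 hB⟩
  · rintro ⟨c, rfl, rfl⟩ x hx
    simp [inner_self_eq_norm_sq_to_K, hx]

/-- Lemma 3.4: for nonzero bounded operators `A, B` on a complex Hilbert space `H` and an
integer `n ≥ 2`, one has `⟨Ax, x⟩ = ⟨Bx, x⟩^n` for every unit vector `x` if and only if
there exists `c ∈ ℂ` with `A = c^n I` and `B = c I`. -/
theorem quadraticForm_power_iff_scalar {H : Type*} [NormedAddCommGroup H]
    [InnerProductSpace ℂ H] [CompleteSpace H]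
    (A B : H →L[ℂ] H) (hA : A ≠ 0) (hB : B ≠ 0) (n : ℕ) (hn : 2 ≤ n) :
    (∀ x : H, ‖x‖ = 1 → (inner ℂ (A x) x : ℂ) = (inner ℂ (B x) x : ℂ) ^ n) ↔
      ∃ c : ℂ, A = c ^ n • (1 : H →L[ℂ] H) ∧ B = c • (1 : H →L[ℂ] H) :=
  quadraticForm_power_iff_scalar_general A B n hn
end
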